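/- arXiv:2201.08309 — 13 statements merged into one kernel-verified Lean document; each statement's English description precedes it below -/
import Mathlib

section
/- Commutator-type error bound for the first-order Trotter splitting: Let H₁, H₂ ∈ ℂ^{N×N} be Hermitian matrices and let t ≥ 0. Then ‖exp(−it(H₁+H₂)) − exp(−itH₁)·exp(−itH₂)‖ ≤ (t²/2)·‖H₁H₂ − H₂H₁‖. -/
open scoped Matrix.Norms.L2Operator

namespace TrotterAux

noncomputable section

abbrev Mat (N : ℕ) := Matrix (Fin N) (Fin N) ℂ

variable {N : ℕ}

abbrev ratNA : NormedAlgebra ℚ (Mat N) :=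
  { (inferInstance : Algebra ℚ (Mat N)) with
    norm_smul_le := fun q A => by
      rw [← algebraMap_smul ℂ q A, norm_smul]; simp [← Rat.norm_cast_real] }

attribute [local instance] ratNA

/-- The basic one-parameter family `r ↦ exp ((c + d r) • H)`. -/
def eG (H : Mat N) (c d : ℂ) (r : ℝ) : Mat N :=
  NormedSpace.exp ((c + d * r) • H)

theorem eG_contin (H : Mat N) (c d : ℂ) : Continuous (eG H c d) :=
  NormedSpace.exp_continuous.comp <|
    (continuous_const.add (continuous_const.mul Complex.continuous_ofReal)).smul continuous_const

theorem eG_deriv' (H : Mat N) (c d : ℂ) (s : ℝ) :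
    HasDerivAt (eG H c d) (d • (H * eG H c d s)) s := by
  have hφ : HasDerivAt (fun r : ℝ => c + d * (r : ℂ)) d s := by
    simpa using ((Complex.ofRealCLM.hasDerivAt (x := s)).const_mul d).const_add c
  have hg := hasDerivAt_exp_smul_const' (𝕂 := ℂ) H (c + d * (s : ℂ))
  exact HasDerivAt.scomp s hg hφ

theorem eG_deriv (H : Mat N) (c d : ℂ) (s : ℝ) :
    HasDerivAt (eG H c d) (d • (eG H c d s * H)) s := by
  have hφ : HasDerivAt (fun r : ℝ => c + d * (r : ℂ)) d s := by
    simpa using ((Complex.ofRealCLM.hasDerivAt (x := s)).const_mul d).const_add c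
  have hg := hasDerivAt_exp_smul_const (𝕂 := ℂ) H (c + d * (s : ℂ))
  exact HasDerivAt.scomp s hg hφ

theorem eG_unit (H : Mat N) (hH : H.IsHermitian) (c d : ℂ)
    (hc : starRingEnd ℂ c = -c) (hd : starRingEnd ℂ d = -d) (r : ℝ) :
    eG H c d r ∈ unitary (Mat N) := by
  apply NormedSpace.exp_mem_unitary_of_mem_skewAdjoint
  rw [skewAdjoint.mem_iff]
  have hcd : starRingEnd ℂ (c + d * r) = -(c + d * r) := by
    rw [map_add, map_mul, hc, hd, Complex.conj_ofReal]; ring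
  rw [star_smul, Matrix.star_eq_conjTranspose, hH.eq]
  rw [show (star (c + d * (r:ℂ)) : ℂ) = starRingEnd ℂ (c + d * r) from rfl, hcd, neg_smul]

end

end TrotterAux

namespace TrotterAux

open Complex MeasureTheory intervalIntegral

noncomputable section
variable {N : ℕ}

attribute [local instance] ratNA

/-- integrand for the inner (commutator growth) bound -/
def Dc (H₁ H₂ : Mat N) (s r : ℝ) : Mat N :=
  eG H₁ ((-Complex.I) * s) Complex.I r *
    (Complex.I • ((H₁ * H₂ - H₂ * H₁) * eG H₁ 0 (-Complex.I) r))

theorem Dc_deriv (H₁ H₂ : Mat N) (s r : ℝ) :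
    HasDerivAt (fun r : ℝ => eG H₁ ((-Complex.I) * s) Complex.I r *
      (H₂ * eG H₁ 0 (-Complex.I) r)) (Dc H₁ H₂ s r) r := by
  have h := (eG_deriv' H₁ ((-Complex.I) * s) Complex.I r).mul
    ((eG_deriv' H₁ 0 (-Complex.I) r).const_mul H₂)
  refine h.congr_deriv ?_
  have hcomm : H₁ * eG H₁ ((-Complex.I) * s) Complex.I r
      = eG H₁ ((-Complex.I) * s) Complex.I r * H₁ :=
    (((Commute.refl H₁).smul_right _).exp_right).eq
  rw [Dc, hcomm]
  simp only [smul_mul_assoc, mul_smul_comm, mul_assoc, sub_mul, mul_sub, smul_sub, neg_smul, mul_neg, neg_mul, smul_neg]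
  abel

theorem comm_bound (hN : 0 < N) (H₁ H₂ : Mat N) (hH₁ : H₁.IsHermitian) (s : ℝ)
    (hs : 0 ≤ s) :
    ‖H₂ * eG H₁ 0 (-Complex.I) s - eG H₁ 0 (-Complex.I) s * H₂‖ ≤
      s * ‖H₁ * H₂ - H₂ * H₁‖ := by
  haveI : Nonempty (Fin N) := ⟨⟨0, hN⟩⟩
  have hDcont : Continuous (Dc H₁ H₂ s) := by
    have h1 := eG_contin H₁ ((-Complex.I) * s) Complex.I
    have h2 := eG_contin H₁ 0 (-Complex.I)
    exact h1.mul ((continuous_const.fun_mul h2).fun_const_smul _)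
  have hFTC : ∫ r in (0:ℝ)..s, Dc H₁ H₂ s r =
      (fun r : ℝ => eG H₁ ((-Complex.I) * s) Complex.I r * (H₂ * eG H₁ 0 (-Complex.I) r)) s -
      (fun r : ℝ => eG H₁ ((-Complex.I) * s) Complex.I r * (H₂ * eG H₁ 0 (-Complex.I) r)) 0 :=
    integral_eq_sub_of_hasDerivAt (fun r _ => Dc_deriv H₁ H₂ s r)
      (hDcont.intervalIntegrable 0 s)
  beta_reduce at hFTC
  have hks : eG H₁ ((-Complex.I) * s) Complex.I s * (H₂ * eG H₁ 0 (-Complex.I) s)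
      = H₂ * eG H₁ 0 (-Complex.I) s := by
    have h1 : ((-Complex.I) * s + Complex.I * s : ℂ) = 0 := by push_cast; ring
    rw [show eG H₁ ((-Complex.I) * s) Complex.I s = NormedSpace.exp
      (((-Complex.I) * s + Complex.I * s) • H₁) from rfl, h1]
    simp [NormedSpace.exp_zero]
  have hk0 : eG H₁ ((-Complex.I) * s) Complex.I 0 * (H₂ * eG H₁ 0 (-Complex.I) 0)
      = eG H₁ 0 (-Complex.I) s * H₂ := by
    have h1 : ((-Complex.I) * s + Complex.I * (0:ℝ) : ℂ) = 0 + (-Complex.I) * s := by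
      push_cast; ring
    have h2 : ((0:ℂ) + (-Complex.I) * ((0:ℝ):ℂ)) = 0 := by push_cast; ring
    rw [show eG H₁ ((-Complex.I) * s) Complex.I 0 = NormedSpace.exp
      (((-Complex.I) * s + Complex.I * (0:ℝ)) • H₁) from rfl, h1]
    rw [show eG H₁ 0 (-Complex.I) 0 = NormedSpace.exp
      ((0 + (-Complex.I) * ((0:ℝ):ℂ)) • H₁) from rfl, h2]
    rw [show NormedSpace.exp ((0 + (-Complex.I) * (s:ℂ)) • H₁) = eG H₁ 0 (-Complex.I) s from rfl]
    simp [NormedSpace.exp_zero, mul_comm]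
  have hbound : ∀ r ∈ Set.uIoc (0:ℝ) s, ‖Dc H₁ H₂ s r‖ ≤ ‖H₁ * H₂ - H₂ * H₁‖ := by
    intro r _
    rw [Dc]
    rw [CStarRing.norm_mem_unitary_mul _
      (eG_unit H₁ hH₁ _ _ (by simp [Complex.conj_ofReal]) (by simp) r)]
    rw [norm_smul, Complex.norm_I, one_mul]
    rw [CStarRing.norm_mul_mem_unitary _
      (eG_unit H₁ hH₁ 0 (-Complex.I) (by simp) (by simp) r)]
  have h := intervalIntegral.norm_integral_le_of_norm_le_const hbound
  rw [hFTC, hks, hk0] at h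
  calc ‖H₂ * eG H₁ 0 (-Complex.I) s - eG H₁ 0 (-Complex.I) s * H₂‖
      ≤ ‖H₁ * H₂ - H₂ * H₁‖ * |s - 0| := h
    _ = s * ‖H₁ * H₂ - H₂ * H₁‖ := by
        rw [sub_zero, _root_.abs_of_nonneg hs, mul_comm]

end
end TrotterAux

namespace TrotterAux
open Complex MeasureTheory intervalIntegral

noncomputable section
variable {N : ℕ}

attribute [local instance] ratNA

/-- integrand for the outer (Trotter) bound -/
def Dm (H₁ H₂ : Mat N) (t r : ℝ) : Mat N :=
  eG (H₁ + H₂) (-(Complex.I * t)) Complex.I r *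
    (Complex.I • ((H₂ * eG H₁ 0 (-Complex.I) r - eG H₁ 0 (-Complex.I) r * H₂) *
      eG H₂ 0 (-Complex.I) r))

theorem Dm_deriv (H₁ H₂ : Mat N) (t r : ℝ) :
    HasDerivAt (fun r : ℝ => eG (H₁ + H₂) (-(Complex.I * t)) Complex.I r *
      (eG H₁ 0 (-Complex.I) r * eG H₂ 0 (-Complex.I) r)) (Dm H₁ H₂ t r) r := by
  have h := (eG_deriv (H₁ + H₂) (-(Complex.I * t)) Complex.I r).mul
    ((eG_deriv' H₁ 0 (-Complex.I) r).mul (eG_deriv' H₂ 0 (-Complex.I) r))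
  refine h.congr_deriv ?_
  rw [Dm]
  simp only [smul_mul_assoc, mul_smul_comm, mul_assoc, sub_mul, mul_sub, smul_sub,
    add_mul, mul_add, smul_add, neg_smul, mul_neg, neg_mul, smul_neg, Pi.mul_apply]
  abel

theorem Dm_cont (H₁ H₂ : Mat N) (t : ℝ) : Continuous (Dm H₁ H₂ t) := by
  have hA := eG_contin (H₁ + H₂) (-(Complex.I * t)) Complex.I
  have h1 := eG_contin H₁ 0 (-Complex.I)
  have h2 := eG_contin H₂ 0 (-Complex.I)
  exact hA.mul ((((continuous_const.fun_mul h1).fun_sub (h1.fun_mul continuous_const)).fun_mul h2).fun_const_smul _)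

end
end TrotterAux

/-- **Commutator-type error bound for the first-order Trotter splitting.**
For Hermitian matrices `H₁, H₂` and `t ≥ 0`,
`‖exp(−it(H₁+H₂)) − exp(−itH₁)·exp(−itH₂)‖ ≤ (t²/2)·‖H₁H₂ − H₂H₁‖`
in the spectral norm. -/
theorem trotter_first_order_commutator_bound (N : ℕ) (hN : 0 < N)
    (H₁ H₂ : Matrix (Fin N) (Fin N) ℂ)
    (hH₁ : H₁.IsHermitian) (hH₂ : H₂.IsHermitian)
    (t : ℝ) (ht : 0 ≤ t) :
    ‖NormedSpace.exp ((-(Complex.I * (t : ℂ))) • (H₁ + H₂)) -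
        NormedSpace.exp ((-(Complex.I * (t : ℂ))) • H₁) *
          NormedSpace.exp ((-(Complex.I * (t : ℂ))) • H₂)‖ ≤
      t ^ 2 / 2 * ‖H₁ * H₂ - H₂ * H₁‖ := by
  haveI : Nonempty (Fin N) := ⟨⟨0, hN⟩⟩
  letI := TrotterAux.ratNA (N := N)
  have hFTC : ∫ r in (0:ℝ)..t, TrotterAux.Dm H₁ H₂ t r =
      (fun r : ℝ => TrotterAux.eG (H₁ + H₂) (-(Complex.I * t)) Complex.I r *
        (TrotterAux.eG H₁ 0 (-Complex.I) r * TrotterAux.eG H₂ 0 (-Complex.I) r)) t -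
      (fun r : ℝ => TrotterAux.eG (H₁ + H₂) (-(Complex.I * t)) Complex.I r *
        (TrotterAux.eG H₁ 0 (-Complex.I) r * TrotterAux.eG H₂ 0 (-Complex.I) r)) 0 :=
    intervalIntegral.integral_eq_sub_of_hasDerivAt
      (fun r _ => TrotterAux.Dm_deriv H₁ H₂ t r)
      ((TrotterAux.Dm_cont H₁ H₂ t).intervalIntegrable 0 t)
  beta_reduce at hFTC
  have hgt : TrotterAux.eG (H₁ + H₂) (-(Complex.I * t)) Complex.I t *
      (TrotterAux.eG H₁ 0 (-Complex.I) t * TrotterAux.eG H₂ 0 (-Complex.I) t) =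
      NormedSpace.exp ((-(Complex.I * (t : ℂ))) • H₁) *
        NormedSpace.exp ((-(Complex.I * (t : ℂ))) • H₂) := by
    have hA : (-(Complex.I * t) + Complex.I * (t:ℝ) : ℂ) = 0 := by push_cast; ring
    have h1 : ((0:ℂ) + (-Complex.I) * (t:ℝ) : ℂ) = -(Complex.I * t) := by push_cast; ring
    rw [show TrotterAux.eG (H₁ + H₂) (-(Complex.I * t)) Complex.I t = NormedSpace.exp
      ((-(Complex.I * t) + Complex.I * (t:ℝ)) • (H₁ + H₂)) from rfl, hA]
    rw [show TrotterAux.eG H₁ 0 (-Complex.I) t = NormedSpace.exp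
      (((0:ℂ) + (-Complex.I) * (t:ℝ)) • H₁) from rfl, h1]
    rw [show TrotterAux.eG H₂ 0 (-Complex.I) t = NormedSpace.exp
      (((0:ℂ) + (-Complex.I) * (t:ℝ)) • H₂) from rfl, h1]
    simp [NormedSpace.exp_zero]
  have hg0 : TrotterAux.eG (H₁ + H₂) (-(Complex.I * t)) Complex.I 0 *
      (TrotterAux.eG H₁ 0 (-Complex.I) 0 * TrotterAux.eG H₂ 0 (-Complex.I) 0) =
      NormedSpace.exp ((-(Complex.I * (t : ℂ))) • (H₁ + H₂)) := by
    have hA : (-(Complex.I * t) + Complex.I * ((0:ℝ)) : ℂ) = -(Complex.I * t) := by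
      push_cast; ring
    have h1 : ((0:ℂ) + (-Complex.I) * ((0:ℝ)) : ℂ) = 0 := by push_cast; ring
    rw [show TrotterAux.eG (H₁ + H₂) (-(Complex.I * t)) Complex.I 0 = NormedSpace.exp
      ((-(Complex.I * t) + Complex.I * ((0:ℝ))) • (H₁ + H₂)) from rfl, hA]
    rw [show TrotterAux.eG H₁ 0 (-Complex.I) 0 = NormedSpace.exp
      (((0:ℂ) + (-Complex.I) * ((0:ℝ))) • H₁) from rfl, h1]
    rw [show TrotterAux.eG H₂ 0 (-Complex.I) 0 = NormedSpace.exp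
      (((0:ℂ) + (-Complex.I) * ((0:ℝ))) • H₂) from rfl, h1]
    simp [NormedSpace.exp_zero]
  rw [hgt, hg0] at hFTC
  rw [show NormedSpace.exp ((-(Complex.I * (t : ℂ))) • (H₁ + H₂)) -
      NormedSpace.exp ((-(Complex.I * (t : ℂ))) • H₁) *
        NormedSpace.exp ((-(Complex.I * (t : ℂ))) • H₂) =
      -(NormedSpace.exp ((-(Complex.I * (t : ℂ))) • H₁) *
          NormedSpace.exp ((-(Complex.I * (t : ℂ))) • H₂) -
        NormedSpace.exp ((-(Complex.I * (t : ℂ))) • (H₁ + H₂))) from (neg_sub _ _).symm,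
    norm_neg, ← hFTC]
  have hb : ∀ᵐ r ∂MeasureTheory.volume.restrict (Set.uIoc (0:ℝ) t),
      ‖TrotterAux.Dm H₁ H₂ t r‖ ≤ r * ‖H₁ * H₂ - H₂ * H₁‖ := by
    filter_upwards [MeasureTheory.ae_restrict_mem measurableSet_uIoc] with r hr
    rw [Set.uIoc_of_le ht] at hr
    rw [TrotterAux.Dm]
    rw [CStarRing.norm_mem_unitary_mul _
      (TrotterAux.eG_unit (H₁ + H₂) (hH₁.add hH₂) _ _
        (by simp [Complex.conj_ofReal]) (by simp) r)]
    rw [norm_smul, Complex.norm_I, one_mul]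
    rw [CStarRing.norm_mul_mem_unitary _
      (TrotterAux.eG_unit H₂ hH₂ 0 (-Complex.I) (by simp) (by simp) r)]
    exact TrotterAux.comm_bound hN H₁ H₂ hH₁ r hr.1.le
  calc ‖∫ r in (0:ℝ)..t, TrotterAux.Dm H₁ H₂ t r‖
      ≤ |∫ r in (0:ℝ)..t, r * ‖H₁ * H₂ - H₂ * H₁‖| :=
        (intervalIntegral.norm_integral_le_of_norm_le ht
          (by rw [← Set.uIoc_of_le ht]; exact (MeasureTheory.ae_restrict_iff' measurableSet_uIoc).mp hb)
          ((continuous_id.mul continuous_const).intervalIntegrable 0 t)).trans (le_abs_self _)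
    _ = t ^ 2 / 2 * ‖H₁ * H₂ - H₂ * H₁‖ := by
        rw [intervalIntegral.integral_mul_const, integral_id]
        have heq : ((t:ℝ) ^ 2 - 0 ^ 2) / 2 * ‖H₁ * H₂ - H₂ * H₁‖ =
            t ^ 2 / 2 * ‖H₁ * H₂ - H₂ * H₁‖ := by ring
        rw [heq, _root_.abs_of_nonneg (by positivity)]
end

section
/- No-cloning theorem: Let N ≥ 2. There do not exist a unitary matrix U ∈ ℂ^{(N·N)×(N·N)}, with rows and columns indexed by pairs (i,j) ∈ [N]×[N], and a unit vector s ∈ ℂ^N such that U·(x ⊗ s) = x ⊗ x for every unit vector x ∈ ℂ^N, where (x ⊗ y)_{(i,j)} = x_i·y_j. -/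
open scoped InnerProductSpace

/-!
A cloning map preserves inner products, and `⟪x ⊗ s, y ⊗ s⟫ = ⟪x, y⟫` while
`⟪x ⊗ x, y ⊗ y⟫ = ⟪x, y⟫²`. So every inner product `t` of two unit vectors would satisfy
`t = t²`, i.e. `t ∈ {0, 1}`; but as soon as `N ≥ 2`, `e₀` and `(3/5) e₀ + (4/5) e₁` are unit
vectors with `t = 3/5` (a Pythagorean triple avoids square roots).
-/

noncomputable def tensorVec {N : ℕ} (x y : EuclideanSpace ℂ (Fin N)) :
    EuclideanSpace ℂ (Fin N × Fin N) :=
  (WithLp.equiv 2 (Fin N × Fin N → ℂ)).symm fun p => x p.1 * y p.2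

theorem inner_tensorVec {N : ℕ} (a b c d : EuclideanSpace ℂ (Fin N)) :
    ⟪tensorVec a b, tensorVec c d⟫_ℂ = ⟪a, c⟫_ℂ * ⟪b, d⟫_ℂ := by
  simp only [tensorVec, PiLp.inner_apply, RCLike.inner_apply, WithLp.equiv_symm_apply, map_mul,
    Fintype.sum_prod_type, Finset.sum_mul_sum]
  exact Finset.sum_congr rfl fun i _ => Finset.sum_congr rfl fun j _ => by ring

theorem Matrix.inner_toEuclideanLin_of_mem_unitaryGroup {n 𝕜 : Type*} [RCLike 𝕜] [Fintype n]
    [DecidableEq n] {U : Matrix n n 𝕜} (hU : U ∈ Matrix.unitaryGroup n 𝕜)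
    (x y : EuclideanSpace 𝕜 n) :
    ⟪Matrix.toEuclideanLin U x, Matrix.toEuclideanLin U y⟫_𝕜 = ⟪x, y⟫_𝕜 :=
  ContinuousLinearMap.inner_map_map_of_mem_unitary
    (Unitary.map_mem (Matrix.toEuclideanCLM (n := n) (𝕜 := 𝕜)) hU) x y

theorem inner_eq_inner_sq_of_clones {N : ℕ}
    {T : EuclideanSpace ℂ (Fin N × Fin N) → EuclideanSpace ℂ (Fin N × Fin N)}
    (hT : ∀ v w, ⟪T v, T w⟫_ℂ = ⟪v, w⟫_ℂ) {s x y : EuclideanSpace ℂ (Fin N)} (hs : ‖s‖ = 1)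
    (hx : T (tensorVec x s) = tensorVec x x) (hy : T (tensorVec y s) = tensorVec y y) :
    ⟪x, y⟫_ℂ = ⟪x, y⟫_ℂ ^ 2 :=
  calc ⟪x, y⟫_ℂ = ⟪x, y⟫_ℂ * ⟪s, s⟫_ℂ := by simp [inner_self_eq_norm_sq_to_K, hs]
    _ = ⟪T (tensorVec x s), T (tensorVec y s)⟫_ℂ := by rw [hT, inner_tensorVec]
    _ = ⟪x, y⟫_ℂ ^ 2 := by rw [hx, hy, inner_tensorVec, sq]

theorem Orthonormal.exists_norm_eq_one_inner_eq_three_fifths {𝕜 E ι : Type*} [RCLike 𝕜]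
    [NormedAddCommGroup E] [InnerProductSpace 𝕜 E] {v : ι → E} (hv : Orthonormal 𝕜 v)
    {i j : ι} (hij : i ≠ j) : ∃ y : E, ‖y‖ = 1 ∧ ⟪v i, y⟫_𝕜 = 3 / 5 := by
  refine ⟨(3 / 5 : 𝕜) • v i + (4 / 5 : 𝕜) • v j, ?_, ?_⟩
  · have hsq : ‖(3 / 5 : 𝕜) • v i + (4 / 5 : 𝕜) • v j‖ ^ 2 = 1 := by
      rw [sq, norm_add_sq_eq_norm_sq_add_norm_sq_of_inner_eq_zero (𝕜 := 𝕜) _ _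
        (by simp [inner_smul_left, inner_smul_right, hv.2 hij])]
      simp only [norm_smul, norm_div, RCLike.norm_ofNat, hv.1 i, hv.1 j, mul_one]
      norm_num
    exact (pow_eq_one_iff_of_nonneg (norm_nonneg _) two_ne_zero).1 hsq
  · simp [inner_add_right, inner_smul_right, hv.1 i, hv.2 hij]

/-- **No-cloning theorem.** For `N ≥ 2` there is no unitary matrix
`U ∈ ℂ^{(N·N)×(N·N)}` and unit vector `s ∈ ℂ^N` such that `U·(x ⊗ s) = x ⊗ x`
for every unit vector `x ∈ ℂ^N`. -/
theorem no_cloning (N : ℕ) (hN : 2 ≤ N) :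
    ¬ ∃ (U : Matrix (Fin N × Fin N) (Fin N × Fin N) ℂ)
        (s : EuclideanSpace ℂ (Fin N)),
      U ∈ Matrix.unitaryGroup (Fin N × Fin N) ℂ ∧ ‖s‖ = 1 ∧
      ∀ x : EuclideanSpace ℂ (Fin N), ‖x‖ = 1 →
        Matrix.toEuclideanLin U (tensorVec x s) = tensorVec x x := by
  rintro ⟨U, s, hU, hs, hclone⟩
  let i : Fin N := ⟨0, by omega⟩
  have he := (EuclideanSpace.basisFun (Fin N) ℂ).orthonormal
  obtain ⟨y, hy, hiy⟩ := he.exists_norm_eq_one_inner_eq_three_fifths (i := i) (j := ⟨1, by omega⟩)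
    (by simp [i])
  have h := inner_eq_inner_sq_of_clones (Matrix.inner_toEuclideanLin_of_mem_unitaryGroup hU) hs
    (hclone _ (he.1 i)) (hclone y hy)
  rw [hiy] at h
  norm_num at h
end

section
/- Grover iteration formula: Let V be a complex inner product space, let x₀ and ψ⊥ be orthonormal unit vectors in V, let θ ∈ ℝ, and set ψ₀ = sin(θ/2)·x₀ + cos(θ/2)·ψ⊥. Define the reflections R_{x₀}(v) = v − 2⟨x₀, v⟩·x₀ and R_{ψ₀}(v) = 2⟨ψ₀, v⟩·ψ₀ − v, and the Grover operator G = R_{ψ₀} ∘ R_{x₀}. Then for every k ∈ ℕ, G^k(ψ₀) = sin((2k+1)θ/2)·x₀ + cos((2k+1)θ/2)·ψ⊥. -/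
/-- **Grover iteration formula.**
Let `x₀` and `ψp` be orthonormal unit vectors in a complex inner product space,
`θ ∈ ℝ`, and `ψ₀ = sin(θ/2)·x₀ + cos(θ/2)·ψp`.  With the reflections
`R_{x₀}(v) = v − 2⟨x₀, v⟩·x₀` and `R_{ψ₀}(v) = 2⟨ψ₀, v⟩·ψ₀ − v` and the Grover
operator `G = R_{ψ₀} ∘ R_{x₀}`, we have for every `k ∈ ℕ`
`G^[k] ψ₀ = sin((2k+1)θ/2)·x₀ + cos((2k+1)θ/2)·ψp`. -/
theorem grover_iteration {V : Type*} [NormedAddCommGroup V] [InnerProductSpace ℂ V]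
    (x₀ ψp : V) (hx₀ : ‖x₀‖ = 1) (hψp : ‖ψp‖ = 1)
    (horth : (inner ℂ x₀ ψp : ℂ) = 0)
    (θ : ℝ)
    (ψ₀ : V) (hψ₀ : ψ₀ = Real.sin (θ / 2) • x₀ + Real.cos (θ / 2) • ψp)
    (Rx₀ Rψ₀ G : V → V)
    (hRx₀ : ∀ v, Rx₀ v = v - (2 * (inner ℂ x₀ v : ℂ)) • x₀)
    (hRψ₀ : ∀ v, Rψ₀ v = (2 * (inner ℂ ψ₀ v : ℂ)) • ψ₀ - v)
    (hG : G = Rψ₀ ∘ Rx₀) :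
    ∀ k : ℕ, G^[k] ψ₀ =
      Real.sin ((2 * k + 1) * θ / 2) • x₀ + Real.cos ((2 * k + 1) * θ / 2) • ψp := by
  have hxx : (inner ℂ x₀ x₀ : ℂ) = 1 := by
    rw [inner_self_eq_norm_sq_to_K, hx₀]; norm_num
  have hpp : (inner ℂ ψp ψp : ℂ) = 1 := by
    rw [inner_self_eq_norm_sq_to_K, hψp]; norm_num
  have hpx : (inner ℂ ψp x₀ : ℂ) = 0 := by
    rw [← inner_conj_symm, horth, map_zero]
  have hinner : ∀ a b : ℝ, ∀ u w : V, (inner ℂ u x₀ : ℂ) = 1 → (inner ℂ u ψp : ℂ) = 0 →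
      (inner ℂ u (a • x₀ + b • ψp) : ℂ) = (a : ℂ) := by
    intro a b u w h1 h2
    rw [← Complex.coe_smul, ← Complex.coe_smul,
      inner_add_right, inner_smul_right, inner_smul_right, h1, h2]
    ring
  have step : ∀ a : ℝ, G (Real.sin a • x₀ + Real.cos a • ψp)
      = Real.sin (a + θ) • x₀ + Real.cos (a + θ) • ψp := by
    intro a
    rw [hG, Function.comp_apply, hRx₀]
    have h1 : (inner ℂ x₀ (Real.sin a • x₀ + Real.cos a • ψp) : ℂ) = (Real.sin a : ℂ) :=
      hinner _ _ _ x₀ hxx horth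
    rw [h1]
    have hw : Real.sin a • x₀ + Real.cos a • ψp - (2 * (Real.sin a : ℂ)) • x₀
        = (-Real.sin a) • x₀ + Real.cos a • ψp := by
      have : (2 * (Real.sin a : ℂ)) • x₀ = (2 * Real.sin a) • x₀ := by
        rw [← Complex.coe_smul]; push_cast; ring_nf
      rw [this]
      match_scalars <;> ring
    rw [hw, hRψ₀]
    have h2 : (inner ℂ ψ₀ ((-Real.sin a) • x₀ + Real.cos a • ψp) : ℂ)
        = (Real.cos (a + θ / 2) : ℂ) := by
      simp only [hψ₀, ← Complex.coe_smul, inner_add_left, inner_add_right,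
        inner_smul_left, inner_smul_right, hxx, hpp, horth, hpx, Complex.conj_ofReal]
      push_cast [Real.cos_add]
      ring
    rw [h2, hψ₀]
    have hcoe : ∀ (c : ℝ) (v : V), ((c : ℂ)) • v = c • v := fun c v => Complex.coe_smul c v
    have h2c : (2 * (Real.cos (a + θ / 2) : ℂ)) • (Real.sin (θ / 2) • x₀ + Real.cos (θ / 2) • ψp)
        = (2 * Real.cos (a + θ / 2) * Real.sin (θ / 2)) • x₀
          + (2 * Real.cos (a + θ / 2) * Real.cos (θ / 2)) • ψp := by
      simp only [← Complex.coe_smul, smul_add, smul_smul]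
      norm_cast
    rw [h2c]
    have hs : 2 * Real.cos (a + θ / 2) * Real.sin (θ / 2) = Real.sin (a + θ) - Real.sin a := by
      have := Real.sin_add (a + θ / 2) (θ / 2)
      have h2 := Real.sin_sub (a + θ / 2) (θ / 2)
      have e1 : a + θ / 2 + θ / 2 = a + θ := by ring
      have e2 : a + θ / 2 - θ / 2 = a := by ring
      rw [e1] at this; rw [e2] at h2
      linarith
    have hc : 2 * Real.cos (a + θ / 2) * Real.cos (θ / 2) = Real.cos (a + θ) + Real.cos a := by
      have := Real.cos_add (a + θ / 2) (θ / 2)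
      have h2 := Real.cos_sub (a + θ / 2) (θ / 2)
      have e1 : a + θ / 2 + θ / 2 = a + θ := by ring
      have e2 : a + θ / 2 - θ / 2 = a := by ring
      rw [e1] at this; rw [e2] at h2
      linarith
    rw [hs, hc]
    match_scalars <;> ring
  intro k
  induction k with
  | zero =>
    simp only [Function.iterate_zero, id_eq, hψ₀, Nat.cast_zero]
    norm_num
  | succ n ih =>
    rw [Function.iterate_succ_apply', ih, step]
    have e : (2 * (n : ℝ) + 1) * θ / 2 + θ = (2 * ((n : ℝ) + 1) + 1) * θ / 2 := by ring
    rw [e]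
    push_cast
    ring_nf
end

section
/- Search lower bound, distance of any fixed state to all basis states: Let N ≥ 1 and let ψ ∈ ℂ^N be a unit vector. Then ∑_{x∈[N]} ‖ψ − e_x‖² ≥ 2N − 2√N, where e_x denotes the x-th standard basis vector. -/
/-- **Search lower bound, distance of any fixed state to all basis states.**
For any unit vector `ψ ∈ ℂ^N`,
`∑_{x∈[N]} ‖ψ − e_x‖² ≥ 2N − 2√N`, where `e_x` is the `x`-th standard basis
vector. -/
theorem search_fixed_state_lower_bound (N : ℕ) (hN : 1 ≤ N)
    (ψ : EuclideanSpace ℂ (Fin N)) (hψ : ‖ψ‖ = 1) :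
    2 * (N : ℝ) - 2 * Real.sqrt N ≤
      ∑ x : Fin N, ‖ψ - EuclideanSpace.single x 1‖ ^ 2 := by
  have hsum : ∑ x : Fin N, ‖ψ x‖ ^ 2 = 1 := by
    have := EuclideanSpace.norm_eq ψ
    rw [hψ] at this
    exact Real.sqrt_eq_one.mp this.symm
  have key : ∀ x : Fin N, ‖ψ - EuclideanSpace.single x 1‖ ^ 2
      = 2 - 2 * (starRingEnd ℂ (ψ x)).re := by
    intro x
    rw [norm_sub_sq (𝕜 := ℂ), EuclideanSpace.inner_single_right,
      EuclideanSpace.norm_single, hψ]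
    simp
    ring
  rw [Finset.sum_congr rfl (fun x _ => key x), Finset.sum_sub_distrib]
  simp only [Finset.sum_const, Finset.card_univ, Fintype.card_fin, nsmul_eq_mul,
    mul_one, ← Finset.mul_sum]
  have hre : ∑ x : Fin N, (starRingEnd ℂ (ψ x)).re ≤ Real.sqrt N := by
    have h1 : ∑ x : Fin N, (starRingEnd ℂ (ψ x)).re ≤ ∑ x : Fin N, ‖ψ x‖ := by
      apply Finset.sum_le_sum
      intro x _
      calc (starRingEnd ℂ (ψ x)).re ≤ |(starRingEnd ℂ (ψ x)).re| := le_abs_self _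
        _ ≤ ‖starRingEnd ℂ (ψ x)‖ := Complex.abs_re_le_norm _
        _ = ‖ψ x‖ := by simp
    have h2 : (∑ x : Fin N, ‖ψ x‖) ^ 2 ≤ N * ∑ x : Fin N, ‖ψ x‖ ^ 2 := by
      simpa using sq_sum_le_card_mul_sum_sq (s := Finset.univ) (f := fun x : Fin N => ‖ψ x‖)
    rw [hsum, mul_one] at h2
    have h3 : ∑ x : Fin N, ‖ψ x‖ ≤ Real.sqrt N := by
      have hnn : (0:ℝ) ≤ ∑ x : Fin N, ‖ψ x‖ := Finset.sum_nonneg fun _ _ => norm_nonneg _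
      nlinarith [Real.sq_sqrt (by positivity : (0:ℝ) ≤ (N:ℝ)),
        Real.sqrt_nonneg (N:ℝ)]
    linarith
  linarith
end

section
/- Search lower bound, drift estimate: Let N ≥ 1, let ψ₀ ∈ ℂ^N be a unit vector, and let U_1, …, U_k ∈ ℂ^{N×N} be unitary matrices. For each x ∈ [N] let R_x = I − 2·e_x·e_x† (the reflection about the hyperplane orthogonal to e_x), and define recursively ψ_0^x = ψ₀, ψ_j^x = U_j·R_x·ψ_{j−1}^x for j = 1,…,k, and ψ_0 = ψ₀, ψ_j = U_j·ψ_{j−1} for j = 1,…,k. Then ∑_{x∈[N]} ‖ψ_k^x − ψ_k‖² ≤ 4k². -/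
open Finset Matrix

lemma unitary_norm_map' {N : ℕ} (A : Matrix (Fin N) (Fin N) ℂ)
    (hA : A ∈ Matrix.unitaryGroup (Fin N) ℂ) (v : EuclideanSpace ℂ (Fin N)) :
    ‖Matrix.toEuclideanLin A v‖ = ‖v‖ := by
  have h1 : Aᴴ * A = 1 := by
    have := hA.1
    rwa [Matrix.star_eq_conjTranspose] at this
  have key : (inner ℂ (Matrix.toEuclideanLin A v) (Matrix.toEuclideanLin A v) : ℂ)
      = inner ℂ v v := by
    rw [← LinearMap.adjoint_inner_left, ← Matrix.toEuclideanLin_conjTranspose_eq_adjoint]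
    have h2 : Matrix.toEuclideanLin Aᴴ (Matrix.toEuclideanLin A v)
        = Matrix.toEuclideanLin (Aᴴ * A) v := by
      simp [Matrix.toEuclideanLin_apply, Matrix.mulVec_mulVec]
    rw [h2, h1]
    congr 1
    simp [Matrix.toEuclideanLin_apply]
  have h2 : ‖Matrix.toEuclideanLin A v‖ ^ 2 = ‖v‖ ^ 2 := by
    rw [inner_self_eq_norm_sq_to_K, inner_self_eq_norm_sq_to_K] at key
    exact_mod_cast key
  calc ‖Matrix.toEuclideanLin A v‖
      = Real.sqrt (‖Matrix.toEuclideanLin A v‖ ^ 2) := (Real.sqrt_sq (norm_nonneg _)).symm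
    _ = Real.sqrt (‖v‖ ^ 2) := by rw [h2]
    _ = ‖v‖ := Real.sqrt_sq (norm_nonneg _)

lemma refl_norm' {N : ℕ} (e v : EuclideanSpace ℂ (Fin N)) (he : ‖e‖ = 1) :
    ‖v - (2 * (inner ℂ e v : ℂ)) • e‖ = ‖v‖ := by
  have h2 : ‖v - (2 * (inner ℂ e v : ℂ)) • e‖ ^ 2 = ‖v‖ ^ 2 := by
    rw [norm_sub_sq (𝕜 := ℂ), inner_smul_right, norm_smul, he, mul_one]
    have hc : (inner ℂ v e : ℂ) = starRingEnd ℂ (inner ℂ e v) := by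
      rw [← inner_conj_symm]
    rw [hc]
    set z : ℂ := inner ℂ e v with hz
    have hre : RCLike.re (2 * z * starRingEnd ℂ z) = 2 * ‖z‖ ^ 2 := by
      rw [show 2 * z * starRingEnd ℂ z = 2 * (z * starRingEnd ℂ z) by ring,
        Complex.mul_conj]
      simp [RCLike.re_to_complex, Complex.normSq_eq_norm_sq,
        Complex.mul_re]
      simp [← Complex.ofReal_pow]
    rw [hre]
    have hn : ‖(2 : ℂ) * z‖ = 2 * ‖z‖ := by
      rw [norm_mul]; norm_num
    rw [hn]
    ring
  calc ‖v - (2 * (inner ℂ e v : ℂ)) • e‖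
      = Real.sqrt (‖v - (2 * (inner ℂ e v : ℂ)) • e‖ ^ 2) := (Real.sqrt_sq (norm_nonneg _)).symm
    _ = Real.sqrt (‖v‖ ^ 2) := by rw [h2]
    _ = ‖v‖ := Real.sqrt_sq (norm_nonneg _)

/-- **Search lower bound, drift estimate.**
Let `ψ₀ ∈ ℂ^N` be a unit vector and `U_1, …, U_k` unitary matrices.  For each
`x ∈ [N]` define the true algorithm
`ψ_0^x = ψ₀`, `ψ_j^x = U_j·R_x·ψ_{j−1}^x` (where `R_x v = v − 2⟨e_x, v⟩ e_x`),
and the fake algorithm `ψ_0 = ψ₀`, `ψ_j = U_j·ψ_{j−1}`.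
Then `∑_{x∈[N]} ‖ψ_k^x − ψ_k‖² ≤ 4k²`. -/
theorem search_drift_bound (N k : ℕ) (hN : 1 ≤ N)
    (ψ₀ : EuclideanSpace ℂ (Fin N)) (hψ₀ : ‖ψ₀‖ = 1)
    (U : Fin k → Matrix (Fin N) (Fin N) ℂ)
    (hU : ∀ j, U j ∈ Matrix.unitaryGroup (Fin N) ℂ)
    (ψx : Fin N → ℕ → EuclideanSpace ℂ (Fin N))
    (ψ : ℕ → EuclideanSpace ℂ (Fin N))
    (hx0 : ∀ x, ψx x 0 = ψ₀)
    (h0 : ψ 0 = ψ₀)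
    (hxstep : ∀ (x : Fin N) (j : Fin k),
      ψx x ((j : ℕ) + 1) = Matrix.toEuclideanLin (U j)
        (ψx x j - (2 * (inner ℂ (EuclideanSpace.single x 1) (ψx x j) : ℂ)) •
          EuclideanSpace.single x 1))
    (hstep : ∀ j : Fin k, ψ ((j : ℕ) + 1) = Matrix.toEuclideanLin (U j) (ψ j)) :
    ∑ x : Fin N, ‖ψx x k - ψ k‖ ^ 2 ≤ 4 * (k : ℝ) ^ 2 := by
  have he : ∀ x : Fin N, ‖(EuclideanSpace.single x (1:ℂ) : EuclideanSpace ℂ (Fin N))‖ = 1 := by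
    intro x; simp
  -- the fake algorithm stays a unit vector
  have hnorm : ∀ j, j ≤ k → ‖ψ j‖ = 1 := by
    intro j
    induction j with
    | zero => intro _; rw [h0]; exact hψ₀
    | succ n ih =>
      intro hn
      have hn' : n < k := hn
      have hs : ψ (n + 1) = Matrix.toEuclideanLin (U ⟨n, hn'⟩) (ψ n) := hstep ⟨n, hn'⟩
      rw [hs, unitary_norm_map' _ (hU _)]
      exact ih (le_of_lt hn')
  -- drift estimate
  have hdrift : ∀ (x : Fin N) (j : ℕ), j ≤ k →
      ‖ψx x j - ψ j‖ ≤ 2 * ∑ i ∈ Finset.range j, ‖(ψ i) x‖ := by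
    intro x j
    induction j with
    | zero => intro _; simp [hx0, h0]
    | succ n ih =>
      intro hn
      have hn' : n < k := hn
      have hxs : ψx x (n + 1) = Matrix.toEuclideanLin (U ⟨n, hn'⟩)
          (ψx x n - (2 * (inner ℂ (EuclideanSpace.single x 1) (ψx x n) : ℂ)) •
            EuclideanSpace.single x 1) := hxstep x ⟨n, hn'⟩
      have hs : ψ (n + 1) = Matrix.toEuclideanLin (U ⟨n, hn'⟩) (ψ n) := hstep ⟨n, hn'⟩
      rw [hxs, hs, ← map_sub, unitary_norm_map' _ (hU _)]
      have hvec : (ψx x n - (2 * (inner ℂ (EuclideanSpace.single x 1) (ψx x n) : ℂ)) •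
            EuclideanSpace.single x 1) - ψ n
          = ((ψx x n - ψ n) -
              (2 * (inner ℂ (EuclideanSpace.single x 1) (ψx x n - ψ n) : ℂ)) •
                EuclideanSpace.single x 1)
            - (2 * (inner ℂ (EuclideanSpace.single x 1) (ψ n) : ℂ)) •
                EuclideanSpace.single x 1 := by
        rw [inner_sub_right]
        module
      rw [hvec]
      have hone : ‖((ψx x n - ψ n) -
          (2 * (inner ℂ (EuclideanSpace.single x 1) (ψx x n - ψ n) : ℂ)) •
            (EuclideanSpace.single x 1 : EuclideanSpace ℂ (Fin N)))‖
          = ‖ψx x n - ψ n‖ := refl_norm' _ _ (he x)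
      have htwo : ‖(2 * (inner ℂ (EuclideanSpace.single x 1) (ψ n) : ℂ)) •
          (EuclideanSpace.single x 1 : EuclideanSpace ℂ (Fin N))‖ = 2 * ‖(ψ n) x‖ := by
        rw [norm_smul, he x, mul_one, norm_mul]
        have : (inner ℂ (EuclideanSpace.single x 1) (ψ n) : ℂ) = (ψ n) x := by
          simp [EuclideanSpace.inner_single_left]
        rw [this]
        norm_num
      calc ‖_ - _‖ ≤ ‖_‖ + ‖_‖ := norm_sub_le _ _
        _ = ‖ψx x n - ψ n‖ + 2 * ‖(ψ n) x‖ := by rw [hone, htwo]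
        _ ≤ 2 * ∑ i ∈ Finset.range n, ‖(ψ i) x‖ + 2 * ‖(ψ n) x‖ := by
            have := ih (le_of_lt hn'); linarith
        _ = 2 * ∑ i ∈ Finset.range (n + 1), ‖(ψ i) x‖ := by
            rw [Finset.sum_range_succ]; ring
  -- sum of squares of components equals the squared norm
  have hcomp : ∀ j, j ≤ k → ∑ x : Fin N, ‖(ψ j) x‖ ^ 2 = 1 := by
    intro j hj
    have h1 : ‖ψ j‖ ^ 2 = ∑ x : Fin N, ‖(ψ j) x‖ ^ 2 := by
      rw [EuclideanSpace.norm_eq]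
      rw [Real.sq_sqrt (by positivity)]
    rw [← h1, hnorm j hj]
    norm_num
  -- assemble
  have step1 : ∀ x : Fin N, ‖ψx x k - ψ k‖ ^ 2
      ≤ 4 * ((k : ℝ) * ∑ i ∈ Finset.range k, ‖(ψ i) x‖ ^ 2) := by
    intro x
    have h1 : ‖ψx x k - ψ k‖ ^ 2 ≤ (2 * ∑ i ∈ Finset.range k, ‖(ψ i) x‖) ^ 2 :=
      pow_le_pow_left₀ (norm_nonneg _) (hdrift x k le_rfl) 2
    have h2 : (∑ i ∈ Finset.range k, ‖(ψ i) x‖) ^ 2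
        ≤ (k : ℝ) * ∑ i ∈ Finset.range k, ‖(ψ i) x‖ ^ 2 := by
      have := sq_sum_le_card_mul_sum_sq (s := Finset.range k) (f := fun i => ‖(ψ i) x‖)
      simpa using this
    calc ‖ψx x k - ψ k‖ ^ 2 ≤ (2 * ∑ i ∈ Finset.range k, ‖(ψ i) x‖) ^ 2 := h1
      _ = 4 * (∑ i ∈ Finset.range k, ‖(ψ i) x‖) ^ 2 := by ring
      _ ≤ 4 * ((k : ℝ) * ∑ i ∈ Finset.range k, ‖(ψ i) x‖ ^ 2) := by linarith
  calc ∑ x : Fin N, ‖ψx x k - ψ k‖ ^ 2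
      ≤ ∑ x : Fin N, 4 * ((k : ℝ) * ∑ i ∈ Finset.range k, ‖(ψ i) x‖ ^ 2) :=
        Finset.sum_le_sum fun x _ => step1 x
    _ = 4 * (k : ℝ) * ∑ i ∈ Finset.range k, ∑ x : Fin N, ‖(ψ i) x‖ ^ 2 := by
        simp_rw [Finset.mul_sum, ← mul_assoc]
        rw [Finset.sum_comm]
    _ = 4 * (k : ℝ) * ∑ i ∈ Finset.range k, (1 : ℝ) := by
        congr 1
        exact Finset.sum_congr rfl fun i hi => hcomp i (le_of_lt (Finset.mem_range.mp hi))
    _ = 4 * (k : ℝ) ^ 2 := by simp; ring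
end

section
/- Query complexity lower bound for unstructured search: Let N ≥ 1, let ψ₀ ∈ ℂ^N be a unit vector, and let U_1, …, U_k ∈ ℂ^{N×N} be unitary matrices. For each x ∈ [N] let R_x = I − 2·e_x·e_x† and define ψ_0^x = ψ₀, ψ_j^x = U_j·R_x·ψ_{j−1}^x for j = 1,…,k. Suppose that for every x ∈ [N] the algorithm succeeds in the sense that |⟨e_x, ψ_k^x⟩|² ≥ 1/2. Then 2k ≥ √(2N − 2√N) − √((2 − √2)·N). -/
open scoped ComplexConjugate
open Matrix Finset

local notation "⟪" x ", " y "⟫" => @inner ℂ _ _ x y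

lemma reflect_norm {E : Type*} [NormedAddCommGroup E] [InnerProductSpace ℂ E]
    (e v : E) (he : ‖e‖ = 1) :
    ‖v - (2 * ⟪e, v⟫) • e‖ = ‖v‖ := by
  have h1 : ‖v - (2 * ⟪e, v⟫) • e‖ ^ 2 = ‖v‖ ^ 2 := by
    rw [norm_sub_sq (𝕜 := ℂ), inner_smul_right, norm_smul, ← inner_conj_symm v e]
    have : (2 * ⟪e, v⟫ * (starRingEnd ℂ) ⟪e, v⟫) = (2 * ‖⟪e, v⟫‖ ^ 2 : ℝ) := by
      rw [mul_assoc, Complex.mul_conj]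
      simp [Complex.normSq_eq_norm_sq]
    rw [this]
    simp [he, ← Complex.ofReal_pow]
    ring
  have h2 := norm_nonneg (v - (2 * ⟪e, v⟫) • e)
  nlinarith [norm_nonneg v]

lemma unitary_norm {n : Type*} [Fintype n] [DecidableEq n]
    (A : Matrix n n ℂ) (hA : A ∈ Matrix.unitaryGroup n ℂ)
    (v : EuclideanSpace ℂ n) : ‖Matrix.toEuclideanLin A v‖ = ‖v‖ := by
  have hMul : Aᴴ * A = 1 := by
    rw [← Matrix.star_eq_conjTranspose]
    exact (Matrix.mem_unitaryGroup_iff'.mp hA)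
  have key : (Matrix.toEuclideanLin Aᴴ) (Matrix.toEuclideanLin A v) = v := by
    simp [Matrix.toEuclideanLin_apply, Matrix.mulVec_mulVec, hMul]
  have h1 : ⟪Matrix.toEuclideanLin A v, Matrix.toEuclideanLin A v⟫ = ⟪v, v⟫ := by
    conv_lhs => rw [← LinearMap.adjoint_inner_left]
    rw [← Matrix.toEuclideanLin_conjTranspose_eq_adjoint, key]
  have h2 : ‖Matrix.toEuclideanLin A v‖ ^ 2 = ‖v‖ ^ 2 := by
    rw [inner_self_eq_norm_sq_to_K, inner_self_eq_norm_sq_to_K] at h1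
    exact_mod_cast h1
  have h3 := norm_nonneg (Matrix.toEuclideanLin A v)
  nlinarith [norm_nonneg v]

lemma euclid_norm_mono {N : ℕ} (f g : EuclideanSpace ℝ (Fin N))
    (h : ∀ x, |f x| ≤ |g x|) : ‖f‖ ≤ ‖g‖ := by
  rw [EuclideanSpace.norm_eq, EuclideanSpace.norm_eq]
  apply Real.sqrt_le_sqrt
  apply Finset.sum_le_sum
  intro i _
  rw [Real.norm_eq_abs, Real.norm_eq_abs]
  exact pow_le_pow_left₀ (abs_nonneg _) (h i) 2

lemma euclid_norm_of_nonneg {N : ℕ} (f : EuclideanSpace ℝ (Fin N))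
    (h : ∀ x, 0 ≤ f x) : ‖f‖ = Real.sqrt (∑ x, f x ^ 2) := by
  rw [EuclideanSpace.norm_eq]
  congr 1
  apply Finset.sum_congr rfl
  intro i _
  rw [Real.norm_eq_abs, sq_abs]

set_option maxHeartbeats 1000000 in
/-- **Query complexity lower bound for unstructured search.**
Let `ψ₀ ∈ ℂ^N` be a unit vector and `U_1, …, U_k` unitary matrices.  For each
`x ∈ [N]` define `ψ_0^x = ψ₀`, `ψ_j^x = U_j·R_x·ψ_{j−1}^x`
(where `R_x v = v − 2⟨e_x, v⟩ e_x`).  If the algorithm succeeds for every `x`,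
i.e. `|⟨e_x, ψ_k^x⟩|² ≥ 1/2`, then `2k ≥ √(2N − 2√N) − √((2 − √2)·N)`. -/
theorem search_query_lower_bound (N k : ℕ) (hN : 1 ≤ N)
    (ψ₀ : EuclideanSpace ℂ (Fin N)) (hψ₀ : ‖ψ₀‖ = 1)
    (U : Fin k → Matrix (Fin N) (Fin N) ℂ)
    (hU : ∀ j, U j ∈ Matrix.unitaryGroup (Fin N) ℂ)
    (ψx : Fin N → ℕ → EuclideanSpace ℂ (Fin N))
    (hx0 : ∀ x, ψx x 0 = ψ₀)
    (hxstep : ∀ (x : Fin N) (j : Fin k),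
      ψx x ((j : ℕ) + 1) = Matrix.toEuclideanLin (U j)
        (ψx x j - (2 * (inner ℂ (EuclideanSpace.single x 1) (ψx x j) : ℂ)) •
          EuclideanSpace.single x 1))
    (hsucc : ∀ x : Fin N,
      (1 : ℝ) / 2 ≤ ‖(inner ℂ (EuclideanSpace.single x 1) (ψx x k) : ℂ)‖ ^ 2) :
    Real.sqrt (2 * N - 2 * Real.sqrt N) - Real.sqrt ((2 - Real.sqrt 2) * N) ≤
      2 * (k : ℝ) := by
  classical
  set e : Fin N → EuclideanSpace ℂ (Fin N) := fun x => EuclideanSpace.single x 1 with he_def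
  have he : ∀ x, ‖e x‖ = 1 := by
    intro x; simp [he_def, EuclideanSpace.norm_single]
  have hinner : ∀ (x : Fin N) (v : EuclideanSpace ℂ (Fin N)), ⟪e x, v⟫ = v x := by
    intro x v; simp [he_def, EuclideanSpace.inner_single_left]
  -- the oracle-free evolution
  let φ : ℕ → EuclideanSpace ℂ (Fin N) := fun n =>
    Nat.rec ψ₀ (fun j ih => if h : j < k then Matrix.toEuclideanLin (U ⟨j, h⟩) ih else ih) n
  have hφ0 : φ 0 = ψ₀ := rfl
  have hφs : ∀ (j : ℕ) (h : j < k), φ (j + 1) = Matrix.toEuclideanLin (U ⟨j, h⟩) (φ j) := by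
    intro j h; simp only [φ, dif_pos h]
  have hφn : ∀ j, j ≤ k → ‖φ j‖ = 1 := by
    intro j
    induction j with
    | zero => intro _; simpa [hφ0] using hψ₀
    | succ j ih =>
      intro hj
      have hjk : j < k := Nat.lt_of_succ_le hj
      rw [hφs j hjk, unitary_norm _ (hU _)]
      exact ih hjk.le
  have hψn : ∀ (x : Fin N) (j : ℕ), j ≤ k → ‖ψx x j‖ = 1 := by
    intro x j
    induction j with
    | zero => intro _; simpa [hx0] using hψ₀
    | succ j ih =>
      intro hj
      have hjk : j < k := Nat.lt_of_succ_le hj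
      have hstep := hxstep x ⟨j, hjk⟩
      simp only [Fin.val_mk] at hstep
      rw [hstep, unitary_norm _ (hU _)]
      rw [show (inner ℂ (EuclideanSpace.single x 1) (ψx x j) : ℂ) = ⟪e x, ψx x j⟫ from rfl]
      rw [reflect_norm (e x) (ψx x j) (he x)]
      exact ih hjk.le
  -- amplitudes of the oracle-free run
  set c : Fin N → ℕ → ℝ := fun x j => ‖(φ j) x‖ with hc_def
  have hcnn : ∀ x j, 0 ≤ c x j := fun x j => norm_nonneg _
  have hcsum : ∀ j, j ≤ k → (∑ x, c x j ^ 2) = 1 := by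
    intro j hj
    have hn := hφn j hj
    rw [EuclideanSpace.norm_eq] at hn
    rw [Real.sqrt_eq_one] at hn
    calc (∑ x, c x j ^ 2) = ∑ x, ‖(φ j) x‖ ^ 2 := by
          apply Finset.sum_congr rfl; intro i _; rfl
      _ = 1 := hn
  -- hybrid argument
  set δ : Fin N → ℝ := fun x => ‖ψx x k - φ k‖ with hδ_def
  have hδnn : ∀ x, 0 ≤ δ x := fun x => norm_nonneg _
  have hhyb : ∀ (x : Fin N) (j : ℕ), j ≤ k →
      ‖ψx x j - φ j‖ ≤ 2 * ∑ i ∈ Finset.range j, c x i := by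
    intro x j
    induction j with
    | zero => intro _; simp [hx0, hφ0]
    | succ j ih =>
      intro hj
      have hjk : j < k := Nat.lt_of_succ_le hj
      have hstep := hxstep x ⟨j, hjk⟩
      simp only [Fin.val_mk] at hstep
      rw [hstep, hφs j hjk, ← map_sub, unitary_norm _ (hU _)]
      rw [show (inner ℂ (EuclideanSpace.single x 1) (ψx x j) : ℂ) = ⟪e x, ψx x j⟫ from rfl]
      rw [show (EuclideanSpace.single x (1:ℂ)) = e x from rfl]
      have halg : (ψx x j - (2 * ⟪e x, ψx x j⟫) • e x) - φ j
          = ((ψx x j - φ j) - (2 * ⟪e x, ψx x j - φ j⟫) • e x) + (-(2 * ⟪e x, φ j⟫)) • e x := by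
        rw [inner_sub_right]
        module
      rw [halg]
      have h1 : ‖(ψx x j - φ j) - (2 * ⟪e x, ψx x j - φ j⟫) • e x‖ = ‖ψx x j - φ j‖ :=
        reflect_norm (e x) _ (he x)
      have h2 : ‖(-(2 * ⟪e x, φ j⟫)) • e x‖ = 2 * c x j := by
        rw [norm_smul, he x, hinner x (φ j)]
        simp [hc_def]
      calc ‖_ + _‖ ≤ ‖(ψx x j - φ j) - (2 * ⟪e x, ψx x j - φ j⟫) • e x‖
            + ‖(-(2 * ⟪e x, φ j⟫)) • e x‖ := norm_add_le _ _
        _ = ‖ψx x j - φ j‖ + 2 * c x j := by rw [h1, h2]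
        _ ≤ 2 * (∑ i ∈ Finset.range j, c x i) + 2 * c x j := by
            linarith [ih hjk.le]
        _ = 2 * ∑ i ∈ Finset.range (j + 1), c x i := by
            rw [Finset.sum_range_succ]; ring
  -- sum of squared deviations is at most 4k²
  have hδsq : (∑ x, δ x ^ 2) ≤ 4 * (k : ℝ) ^ 2 := by
    have h1 : ∀ x : Fin N, δ x ^ 2 ≤ 4 * ((k : ℝ) * ∑ i ∈ Finset.range k, c x i ^ 2) := by
      intro x
      have h := hhyb x k le_rfl
      have hnn : (0:ℝ) ≤ ∑ i ∈ Finset.range k, c x i :=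
        Finset.sum_nonneg fun i _ => hcnn x i
      have hsq : δ x ^ 2 ≤ (2 * ∑ i ∈ Finset.range k, c x i) ^ 2 :=
        pow_le_pow_left₀ (norm_nonneg _) h 2
      have hcs := sq_sum_le_card_mul_sum_sq (s := Finset.range k) (f := c x)
      simp only [Finset.card_range] at hcs
      nlinarith
    calc (∑ x, δ x ^ 2) ≤ ∑ x : Fin N, 4 * ((k:ℝ) * ∑ i ∈ Finset.range k, c x i ^ 2) :=
          Finset.sum_le_sum fun x _ => h1 x
      _ = 4 * ((k:ℝ) * ∑ i ∈ Finset.range k, (∑ x : Fin N, c x i ^ 2)) := by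
          rw [← Finset.mul_sum, ← Finset.mul_sum, Finset.sum_comm]
      _ = 4 * ((k:ℝ) * ∑ i ∈ Finset.range k, (1:ℝ)) := by
          congr 2
          apply Finset.sum_congr rfl
          intro i hi
          exact hcsum i (Finset.mem_range.mp hi).le
      _ = 4 * (k:ℝ) ^ 2 := by simp; ring
  -- per-x lower bound
  have hsqrt2_lt : Real.sqrt 2 ≤ 2 := by
    nlinarith [Real.sq_sqrt (show (0:ℝ) ≤ 2 by norm_num), Real.sqrt_nonneg 2]
  have hlow : ∀ x : Fin N, Real.sqrt (2 - 2 * c x k) ≤ δ x + Real.sqrt (2 - Real.sqrt 2) := by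
    intro x
    have hp2 : (1:ℝ)/2 ≤ ‖⟪e x, ψx x k⟫‖ ^ 2 := hsucc x
    set p : ℂ := ⟪e x, ψx x k⟫ with hp_def
    have hpnn := norm_nonneg p
    have hpabs : Real.sqrt 2 / 2 ≤ ‖p‖ := by
      nlinarith [Real.sq_sqrt (show (0:ℝ) ≤ 2 by norm_num), Real.sqrt_nonneg 2]
    have hpabs0 : (0:ℝ) < ‖p‖ := by
      have h2 : (0:ℝ) < Real.sqrt 2 := by positivity
      linarith
    set θ : ℂ := p / (‖p‖ : ℂ) with hθ_def
    have hθabs : ‖θ‖ = 1 := by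
      rw [hθ_def, norm_div, Complex.norm_real, norm_norm, div_self (ne_of_gt hpabs0)]
    have hψk : ‖ψx x k‖ = 1 := hψn x k le_rfl
    have hθnorm : ‖θ • e x‖ = 1 := by
      rw [norm_smul, he x, mul_one, hθabs]
    have hθp : θ * (starRingEnd ℂ) p = (‖p‖ : ℂ) := by
      have hne : ((‖p‖ : ℝ) : ℂ) ≠ 0 := Complex.ofReal_ne_zero.mpr (ne_of_gt hpabs0)
      rw [hθ_def, div_mul_eq_mul_div, Complex.mul_conj, Complex.normSq_eq_norm_sq]
      rw [show ((‖p‖ ^ 2 : ℝ) : ℂ) = (‖p‖ : ℂ) ^ 2 by push_cast; ring, sq,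
        mul_div_assoc, div_self hne, mul_one]
    have ha : ‖ψx x k - θ • e x‖ ^ 2 = 2 - 2 * ‖p‖ := by
      rw [norm_sub_sq (𝕜 := ℂ), inner_smul_right, ← inner_conj_symm (ψx x k) (e x),
        ← hp_def, hθp, hψk, hθnorm]
      simp only [RCLike.re_to_complex, Complex.ofReal_re]
      ring
    have ha' : ‖ψx x k - θ • e x‖ ≤ Real.sqrt (2 - Real.sqrt 2) := by
      rw [← Real.sqrt_sq (norm_nonneg (ψx x k - θ • e x)), ha]
      apply Real.sqrt_le_sqrt
      nlinarith [hpabs]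
    have hq : ⟪φ k, e x⟫ = (starRingEnd ℂ) ((φ k) x) := by
      rw [← inner_conj_symm, hinner]
    have hb : 2 - 2 * c x k ≤ ‖φ k - θ • e x‖ ^ 2 := by
      rw [norm_sub_sq (𝕜 := ℂ), inner_smul_right, hq, hφn k le_rfl, hθnorm]
      simp only [RCLike.re_to_complex]
      have hre : (θ * (starRingEnd ℂ) ((φ k) x)).re ≤ c x k := by
        calc (θ * (starRingEnd ℂ) ((φ k) x)).re
            ≤ ‖θ * (starRingEnd ℂ) ((φ k) x)‖ := Complex.re_le_norm _
          _ = c x k := by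
              rw [norm_mul, hθabs, one_mul, Complex.norm_conj]
      nlinarith
    have hbs : Real.sqrt (2 - 2 * c x k) ≤ ‖φ k - θ • e x‖ := by
      rw [← Real.sqrt_sq (norm_nonneg (φ k - θ • e x))]
      exact Real.sqrt_le_sqrt hb
    calc Real.sqrt (2 - 2 * c x k) ≤ ‖φ k - θ • e x‖ := hbs
      _ ≤ ‖φ k - ψx x k‖ + ‖ψx x k - θ • e x‖ := by
          have := dist_triangle (φ k) (ψx x k) (θ • e x)
          simpa [dist_eq_norm] using this
      _ ≤ δ x + Real.sqrt (2 - Real.sqrt 2) := by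
          rw [norm_sub_rev (φ k)]
          exact add_le_add le_rfl ha'
  -- amplitude sum bounds
  have hck1 : ∀ x, c x k ≤ 1 := by
    intro x
    have h := hcsum k le_rfl
    have h1 : c x k ^ 2 ≤ 1 := by
      rw [← h]
      exact Finset.single_le_sum (f := fun y => c y k ^ 2)
        (fun y _ => sq_nonneg _) (Finset.mem_univ x)
    nlinarith [hcnn x k]
  have hcksum : (∑ x, c x k) ≤ Real.sqrt N := by
    have hcs := sq_sum_le_card_mul_sum_sq (s := (Finset.univ : Finset (Fin N)))
      (f := fun x => c x k)
    simp only [Finset.card_univ, Fintype.card_fin] at hcs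
    rw [hcsum k le_rfl, mul_one] at hcs
    have hnn : (0:ℝ) ≤ ∑ x, c x k := Finset.sum_nonneg fun x _ => hcnn x k
    nlinarith [Real.sqrt_nonneg (N:ℝ), Real.sq_sqrt (Nat.cast_nonneg (α := ℝ) N)]
  -- assemble via Minkowski in ℓ²
  have hD2k : Real.sqrt (∑ x, δ x ^ 2) ≤ 2 * (k:ℝ) := by
    have h := Real.sqrt_le_sqrt (show (∑ x, δ x ^ 2) ≤ (2*(k:ℝ))^2 by nlinarith)
    rwa [Real.sqrt_sq (by positivity)] at h
  let B : EuclideanSpace ℝ (Fin N) :=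
    (WithLp.equiv 2 (Fin N → ℝ)).symm fun x => Real.sqrt (2 - 2 * c x k)
  let D : EuclideanSpace ℝ (Fin N) := (WithLp.equiv 2 (Fin N → ℝ)).symm fun x => δ x
  let A : EuclideanSpace ℝ (Fin N) :=
    (WithLp.equiv 2 (Fin N → ℝ)).symm fun x => Real.sqrt (2 - Real.sqrt 2)
  have hBnorm : ‖B‖ = Real.sqrt (∑ x, (2 - 2 * c x k)) := by
    rw [euclid_norm_of_nonneg B (fun x => Real.sqrt_nonneg _)]
    congr 1
    apply Finset.sum_congr rfl
    intro x _
    show Real.sqrt (2 - 2 * c x k) ^ 2 = _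
    rw [Real.sq_sqrt (by linarith [hck1 x])]
  have hDnorm : ‖D‖ = Real.sqrt (∑ x, δ x ^ 2) := euclid_norm_of_nonneg D hδnn
  have hAnorm : ‖A‖ = Real.sqrt ((2 - Real.sqrt 2) * N) := by
    rw [euclid_norm_of_nonneg A (fun x => Real.sqrt_nonneg _)]
    congr 1
    show (∑ _x : Fin N, Real.sqrt (2 - Real.sqrt 2) ^ 2) = _
    rw [Real.sq_sqrt (by linarith [hsqrt2_lt]), Finset.sum_const, Finset.card_univ,
      Fintype.card_fin, nsmul_eq_mul, mul_comm]
  have hBDA : ‖B‖ ≤ ‖D + A‖ := by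
    apply euclid_norm_mono
    intro x
    show |Real.sqrt (2 - 2 * c x k)| ≤ |δ x + Real.sqrt (2 - Real.sqrt 2)|
    rw [abs_of_nonneg (by positivity : (0:ℝ) ≤ Real.sqrt (2 - 2 * c x k)),
      abs_of_nonneg (by have := hδnn x; positivity)]
    exact hlow x
  have htri : ‖D + A‖ ≤ ‖D‖ + ‖A‖ := norm_add_le _ _
  have hsum2 : (∑ x, (2 - 2 * c x k)) = 2 * (N:ℝ) - 2 * ∑ x, c x k := by
    rw [Finset.sum_sub_distrib, ← Finset.mul_sum, Finset.sum_const, Finset.card_univ,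
      Fintype.card_fin, nsmul_eq_mul]
    ring
  have hBlow : Real.sqrt (2 * (N:ℝ) - 2 * Real.sqrt N) ≤ ‖B‖ := by
    rw [hBnorm, hsum2]
    apply Real.sqrt_le_sqrt
    linarith [hcksum]
  have hfinal : Real.sqrt (2 * (N:ℝ) - 2 * Real.sqrt N)
      ≤ 2 * (k:ℝ) + Real.sqrt ((2 - Real.sqrt 2) * N) := by
    calc Real.sqrt (2 * (N:ℝ) - 2 * Real.sqrt N) ≤ ‖B‖ := hBlow
      _ ≤ ‖D‖ + ‖A‖ := le_trans hBDA htri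
      _ = Real.sqrt (∑ x, δ x ^ 2) + Real.sqrt ((2 - Real.sqrt 2) * N) := by
          rw [hDnorm, hAnorm]
      _ ≤ 2 * (k:ℝ) + Real.sqrt ((2 - Real.sqrt 2) * N) := by linarith [hD2k]
  linarith [hfinal]
end

section
/- Tail probability bound for quantum phase estimation: Let T be a positive integer, φ ∈ ℝ, and ε > 0. For each k ∈ [T] = {0,…,T−1} define γ_k = (1/T)·∑_{j=0}^{T−1} e^{2πi·j·(φ − k/T)}. Then ∑_{k ∈ [T], |φ − k/T|₁ ≥ ε} |γ_k|² ≤ 1/(2Tε) + 1/(2(Tε)²). -/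
open Real

/-- The distance from a real number to the nearest integer
(the distance on the unit circle `ℝ/ℤ`). -/
noncomputable def distToInt (t : ℝ) : ℝ := |t - round t|


lemma tail_aux (S : ℝ) (hS : 0 < S) : ∀ N : ℕ,
    ∑ j ∈ Finset.range (N+1), (1/(S+j))^2 ≤ 1/S^2 + 1/S - 1/(S+N) := by
  intro N
  induction N with
  | zero => simp
  | succ N ih =>
    rw [Finset.sum_range_succ]
    have h1 : (0:ℝ) < S + N := by positivity
    have h2 : (0:ℝ) < S + (N+1) := by positivity
    have key : (1/(S+(N+1:ℕ)))^2 ≤ 1/(S+N) - 1/(S+(N+1)) := by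
      push_cast
      rw [div_sub_div _ _ (ne_of_gt h1) (ne_of_gt h2), div_pow, one_pow]
      rw [div_le_div_iff₀ (by positivity) (by positivity)]
      nlinarith
    push_cast at *
    linarith

lemma tail_sum (S : ℝ) (hS : 0 < S) (F : Finset ℕ) :
    ∑ j ∈ F, (1/(S+j))^2 ≤ 1/S^2 + 1/S := by
  obtain ⟨N, hN⟩ := F.exists_nat_subset_range
  calc ∑ j ∈ F, (1/(S+j))^2 ≤ ∑ j ∈ Finset.range (N+1), (1/(S+j))^2 := by
        apply Finset.sum_le_sum_of_subset_of_nonneg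
        · exact hN.trans (Finset.range_subset_range.2 (Nat.le_succ N))
        · intros; positivity
    _ ≤ 1/S^2 + 1/S - 1/(S+N) := tail_aux S hS N
    _ ≤ 1/S^2 + 1/S := by
        have : (0:ℝ) < S + N := by positivity
        have := one_div_pos.2 this
        linarith



lemma side_bound (S : ℝ) (hS : 0 < S) (F : Finset ℕ) (c : ℝ) (n : ℕ → ℤ)
    (hinj : Set.InjOn n F) (hge : ∀ k ∈ F, S ≤ c + n k) :
    ∑ k ∈ F, (1/(c + n k))^2 ≤ 1/S^2 + 1/S := by
  rcases F.eq_empty_or_nonempty with rfl | hne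
  · simp; positivity
  obtain ⟨k₀, hk₀, hmin⟩ := F.exists_min_image n hne
  set i : ℕ → ℕ := fun k => (n k - n k₀).toNat with hi
  have hcast : ∀ k ∈ F, ((i k : ℤ) : ℝ) = (n k : ℝ) - n k₀ := by
    intro k hk
    rw [hi]
    simp only [Int.toNat_of_nonneg (sub_nonneg.2 (hmin k hk))]
    push_cast; ring
  have hbound : ∀ k ∈ F, (1/(c + n k))^2 ≤ (1/(S + i k))^2 := by
    intro k hk
    have h1 : S + (i k : ℝ) ≤ c + n k := by
      have := hge k₀ hk₀
      have h2 := hcast k hk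
      push_cast at h2 ⊢
      linarith
    have h3 : (0:ℝ) < S + i k := by positivity
    have h4 : (0:ℝ) < c + n k := lt_of_lt_of_le h3 h1
    rw [one_div, one_div]
    exact pow_le_pow_left₀ (by positivity) (inv_anti₀ h3 h1) 2
  calc ∑ k ∈ F, (1/(c + n k))^2 ≤ ∑ k ∈ F, (1/(S + i k))^2 :=
        Finset.sum_le_sum hbound
    _ = ∑ j ∈ F.image i, (1/(S + j))^2 := by
        rw [Finset.sum_image]
        intro a ha b hb hab
        apply hinj ha hb
        have ha' := hcast a ha
        have hb' := hcast b hb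
        rw [hab] at ha'
        rw [hb'] at ha'
        have : (n a : ℝ) = n b := by
          have := hcast a ha
          rw [hab, hb'] at this
          linarith
        exact_mod_cast this
    _ ≤ 1/S^2 + 1/S := tail_sum S hS _

lemma distToInt_nonneg (t : ℝ) : 0 ≤ distToInt t := abs_nonneg _

lemma sin_lower (t : ℝ) : 2 * distToInt t ≤ |Real.sin (π * t)| := by
  set d := t - round t with hd
  have habs : |d| ≤ 1/2 := abs_sub_round t
  have h1 : Real.sin (π * t) = (-1)^(round t) * Real.sin (π * d) := by
    have : π * t = π * d + round t * π := by rw [hd]; ring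
    rw [this, Real.sin_add_int_mul_pi]
  have h2 : |Real.sin (π * t)| = |Real.sin (π * d)| := by
    rw [h1, abs_mul]
    rcases Int.even_or_odd (round t) with he | ho
    · rw [he.neg_one_zpow]; simp
    · rw [Odd.neg_one_zpow ho]; simp
  rw [h2]
  have h3 : |Real.sin (π * d)| = Real.sin (π * |d|) := by
    rcases abs_cases d with ⟨he, _⟩ | ⟨he, hneg⟩
    · rw [he, abs_of_nonneg]
      apply Real.sin_nonneg_of_nonneg_of_le_pi
      · positivity
      · nlinarith [Real.pi_pos, habs, he ▸ abs_nonneg d]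
    · rw [he, mul_neg, Real.sin_neg]
      apply abs_of_nonpos
      have h5 : 0 ≤ Real.sin (π * (-d)) := by
        apply Real.sin_nonneg_of_nonneg_of_le_pi
        · nlinarith [Real.pi_pos]
        · nlinarith [Real.pi_pos, habs, he ▸ abs_nonneg d]
      rw [mul_neg, Real.sin_neg] at h5
      linarith
  rw [h3]
  have := Real.mul_le_sin (x := π * |d|) (by positivity) (by nlinarith [Real.pi_pos])
  calc 2 * distToInt t = 2/π * (π * |d|) := by
        field_simp [distToInt, ← hd]
        rfl
    _ ≤ Real.sin (π * |d|) := this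

lemma amp_bound (T : ℕ) (hT : 0 < T) (δ : ℝ) (hδ : 0 < distToInt δ) :
    ‖((1 / (T : ℂ)) * ∑ j ∈ Finset.range T,
      Complex.exp (2 * Real.pi * Complex.I * (j : ℂ) * (δ : ℂ)))‖ ≤
    1 / (2 * T * distToInt δ) := by
  set z : ℂ := Complex.exp ((2 * π * δ : ℝ) * Complex.I) with hz
  have hterm : ∀ j : ℕ, Complex.exp (2 * Real.pi * Complex.I * (j : ℂ) * (δ : ℂ)) = z ^ j := by
    intro j
    rw [hz, ← Complex.exp_nat_mul]
    congr 1
    push_cast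
    ring
  have hz1 : z ≠ 1 := by
    intro h
    rw [hz, Complex.exp_eq_one_iff] at h
    obtain ⟨n, hn⟩ := h
    have h2 : ((2 * π * δ : ℝ) : ℂ) = (n : ℂ) * 2 * π :=
      mul_right_cancel₀ Complex.I_ne_zero (by rw [hn]; push_cast; ring)
    have h3 : (2 * π * δ : ℝ) = (n : ℝ) * 2 * π := by exact_mod_cast h2
    have hδn : δ = n := by
      have hπ := Real.pi_pos
      nlinarith [h3]
    rw [hδn] at hδ
    simp [distToInt] at hδ
  have hsum : ∑ j ∈ Finset.range T, z ^ j = (z ^ T - 1) / (z - 1) := geom_sum_eq hz1 T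
  have habs_z : ‖z‖ = 1 := Complex.norm_exp_ofReal_mul_I _
  have hnum : ‖z ^ T - 1‖ ≤ 2 := by
    have h := norm_add_le (z ^ T) (-1)
    rw [← sub_eq_add_neg, norm_neg, norm_one, norm_pow, habs_z, one_pow] at h
    linarith
  have hden : ‖z - 1‖ = 2 * |Real.sin (π * δ)| := by
    set w : ℂ := ((π * δ : ℝ) : ℂ) with hw
    have hfact : z - 1 = Complex.exp (w * Complex.I) * (2 * Complex.sin w * Complex.I) := by
      have e1 : Complex.exp (w * Complex.I) * Complex.exp (w * Complex.I) = z := by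
        rw [hz, ← Complex.exp_add]
        congr 1
        rw [hw]
        push_cast
        ring
      have e2 : Complex.exp (w * Complex.I) * Complex.exp (-w * Complex.I) = 1 := by
        rw [← Complex.exp_add, ← Complex.exp_zero]
        congr 1
        ring
      have e3 : 2 * Complex.sin w * Complex.I = Complex.exp (w * Complex.I) - Complex.exp (-w * Complex.I) := by
        rw [Complex.sin]
        ring_nf
        rw [Complex.I_sq]
        ring
      rw [e3, mul_sub, e1, e2]
    rw [hfact, norm_mul, Complex.norm_exp_ofReal_mul_I, one_mul, norm_mul, norm_mul,
      Complex.norm_I, mul_one, Complex.norm_two, hw, ← Complex.ofReal_sin, Complex.norm_real, Real.norm_eq_abs]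
  have hsin : 2 * distToInt δ ≤ |Real.sin (π * δ)| := sin_lower δ
  have hTpos : (0:ℝ) < T := Nat.cast_pos.2 hT
  calc ‖((1 / (T : ℂ)) * ∑ j ∈ Finset.range T,
        Complex.exp (2 * Real.pi * Complex.I * (j : ℂ) * (δ : ℂ)))‖
      = (1 / T) * (‖z ^ T - 1‖ / ‖z - 1‖) := by
        rw [norm_mul]
        congr 1
        · rw [norm_div, norm_one, Complex.norm_natCast]
        · rw [Finset.sum_congr rfl (fun j _ => hterm j), hsum, norm_div]
    _ ≤ (1 / T) * (2 / (2 * (2 * distToInt δ))) := by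
        apply mul_le_mul_of_nonneg_left _ (by positivity)
        rw [hden]
        have hd0 : (0:ℝ) < 2 * (2 * distToInt δ) := by positivity
        exact div_le_div₀ (by norm_num) hnum hd0 (by linarith [hsin])
    _ = 1 / (2 * T * distToInt δ) := by
        field_simp


/-- **Tail probability bound for quantum phase estimation.**
For a positive integer `T`, `φ ∈ ℝ` and `ε > 0`, with
`γ_k = (1/T)·∑_{j=0}^{T−1} e^{2πi·j·(φ − k/T)}`, we have
`∑_{k ∈ [T], |φ − k/T|₁ ≥ ε} |γ_k|² ≤ 1/(2Tε) + 1/(2(Tε)²)`. -/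
theorem qpe_tail_bound (T : ℕ) (hT : 0 < T) (φ : ℝ) (ε : ℝ) (hε : 0 < ε) :
    ∑ k ∈ (Finset.range T).filter (fun k : ℕ => ε ≤ distToInt (φ - (k : ℝ) / T)),
        ‖((1 / (T : ℂ)) * ∑ j ∈ Finset.range T,
          Complex.exp (2 * Real.pi * Complex.I * (j : ℂ) *
            ((φ - (k : ℝ) / T : ℝ) : ℂ)))‖ ^ 2 ≤
      1 / (2 * T * ε) + 1 / (2 * ((T : ℝ) * ε) ^ 2) := by
  classical
  have hTpos : (0:ℝ) < T := Nat.cast_pos.2 hT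
  set S : ℝ := T * ε with hSdef
  have hSpos : 0 < S := by positivity
  set δ : ℕ → ℝ := fun k => φ - k / T with hδdef
  set F := (Finset.range T).filter (fun k : ℕ => ε ≤ distToInt (δ k)) with hFdef
  set n : ℕ → ℤ := fun k => -(k:ℤ) - T * round (δ k) with hndef
  set ν : ℕ → ℝ := fun k => T * φ + (n k) with hνdef
  have hν : ∀ k, ν k = T * (δ k - round (δ k)) := by
    intro k
    rw [hνdef, hndef, hδdef]
    push_cast
    field_simp
    ring
  have hνabs : ∀ k, |ν k| = T * distToInt (δ k) := by
    intro k
    rw [hν, distToInt, abs_mul, abs_of_nonneg hTpos.le]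
  have hinj : Set.InjOn n (F : Set ℕ) := by
    intro a ha b hb hab
    simp only [hFdef, Finset.coe_filter, Set.mem_setOf_eq, Finset.mem_range] at ha hb
    have hdvd : (T:ℤ) ∣ ((b:ℤ) - a) := by
      refine ⟨round (δ a) - round (δ b), ?_⟩
      have : -(a:ℤ) - T * round (δ a) = -(b:ℤ) - T * round (δ b) := hab
      linarith
    have h0 : ((b:ℤ) - a) = 0 := Int.eq_zero_of_abs_lt_dvd hdvd (by
      rw [abs_sub_lt_iff]
      constructor <;> [omega; omega])
    omega
  -- per-term bound
  have hterm : ∀ k ∈ F, ‖((1 / (T : ℂ)) * ∑ j ∈ Finset.range T,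
          Complex.exp (2 * Real.pi * Complex.I * (j : ℂ) * ((δ k : ℝ) : ℂ)))‖ ^ 2 ≤
        (1/4) * (1/(ν k))^2 := by
    intro k hk
    have hkd : ε ≤ distToInt (δ k) := (Finset.mem_filter.1 hk).2
    have hd0 : 0 < distToInt (δ k) := lt_of_lt_of_le hε hkd
    have h1 := amp_bound T hT (δ k) hd0
    have h2 : ‖((1 / (T : ℂ)) * ∑ j ∈ Finset.range T,
          Complex.exp (2 * Real.pi * Complex.I * (j : ℂ) * ((δ k : ℝ) : ℂ)))‖ ^ 2 ≤
        (1/(2*T*distToInt (δ k)))^2 :=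
      pow_le_pow_left₀ (norm_nonneg _) h1 2
    refine h2.trans (le_of_eq ?_)
    have hνsq : (ν k)^2 = (T * distToInt (δ k))^2 := by
      rw [← sq_abs, hνabs]
    have hne : T * distToInt (δ k) ≠ 0 := by positivity
    have hνne : ν k ≠ 0 := by
      intro h
      rw [h] at hνsq
      exact hne (by nlinarith [hνsq, mul_pos hTpos hd0])
    field_simp
    nlinarith [hνsq]
  have key : ∑ k ∈ F, ‖((1 / (T : ℂ)) * ∑ j ∈ Finset.range T,
          Complex.exp (2 * Real.pi * Complex.I * (j : ℂ) * ((δ k : ℝ) : ℂ)))‖ ^ 2 ≤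
      ∑ k ∈ F, (1/4) * (1/(ν k))^2 := Finset.sum_le_sum hterm
  have hsplit : ∑ k ∈ F, (1/4) * (1/(ν k))^2 =
      ∑ k ∈ F.filter (fun k => 0 < ν k), (1/4) * (1/(ν k))^2 +
      ∑ k ∈ F.filter (fun k => ¬ 0 < ν k), (1/4) * (1/(ν k))^2 :=
    (Finset.sum_filter_add_sum_filter_not F _ _).symm
  have hSle : ∀ k ∈ F, S ≤ |ν k| := by
    intro k hk
    have hkd : ε ≤ distToInt (δ k) := (Finset.mem_filter.1 hk).2
    rw [hνabs, hSdef]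
    exact mul_le_mul_of_nonneg_left hkd hTpos.le
  have hpos : ∑ k ∈ F.filter (fun k => 0 < ν k), (1/4) * (1/(ν k))^2 ≤
      (1/4) * (1/S^2 + 1/S) := by
    rw [← Finset.mul_sum]
    apply mul_le_mul_of_nonneg_left _ (by norm_num)
    have := side_bound S hSpos (F.filter (fun k => 0 < ν k)) (T * φ) n
      (hinj.mono (Finset.coe_subset.2 (Finset.filter_subset _ _)))
      (fun k hk => by
        have hk' := Finset.mem_filter.1 hk
        have := hSle k hk'.1
        rw [abs_of_pos hk'.2] at this
        exact this)
    exact this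
  have hneg : ∑ k ∈ F.filter (fun k => ¬ 0 < ν k), (1/4) * (1/(ν k))^2 ≤
      (1/4) * (1/S^2 + 1/S) := by
    rw [← Finset.mul_sum]
    apply mul_le_mul_of_nonneg_left _ (by norm_num)
    have hb := side_bound S hSpos (F.filter (fun k => ¬ 0 < ν k)) (-(T * φ)) (fun k => -n k)
      (fun a ha b hb hab => by
        apply hinj (Finset.filter_subset _ _ (by exact_mod_cast ha))
          (Finset.filter_subset _ _ (by exact_mod_cast hb))
        have : -(n a) = -(n b) := hab
        omega)
      (fun k hk => by
        have hk' := Finset.mem_filter.1 hk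
        have h1 := hSle k hk'.1
        have h2 : ν k < 0 := by
          rcases lt_or_ge (ν k) 0 with h | h
          · exact h
          · exact absurd (lt_of_lt_of_le hSpos (by rwa [abs_of_nonneg h] at h1)) hk'.2
        rw [abs_of_neg h2] at h1
        have he : ν k = ↑T * φ + ↑(n k) := rfl
        push_cast
        linarith)
    refine le_trans (le_of_eq ?_) hb
    apply Finset.sum_congr rfl
    intro k hk
    have he : ν k = ↑T * φ + ↑(n k) := rfl
    have : -((T:ℝ) * φ) + ((-n k : ℤ) : ℝ) = -(ν k) := by
      rw [he]; push_cast; ring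
    rw [this]
    rw [div_pow, div_pow, one_pow, neg_pow]
    norm_num
  calc ∑ k ∈ F, ‖((1 / (T : ℂ)) * ∑ j ∈ Finset.range T,
          Complex.exp (2 * Real.pi * Complex.I * (j : ℂ) * ((δ k : ℝ) : ℂ)))‖ ^ 2
      ≤ (1/4) * (1/S^2 + 1/S) + (1/4) * (1/S^2 + 1/S) := by
        rw [hsplit] at key
        linarith [key, hpos, hneg]
    _ = 1 / (2 * T * ε) + 1 / (2 * ((T : ℝ) * ε) ^ 2) := by
        rw [hSdef]
        field_simp
        ring
end

section
/- Multiplicative eigenvalue perturbation bound for the quantum linear systems problem: Let {v_j}_{j∈J} be a finite orthonormal family in ℂ^N, let β_j ∈ ℂ, let λ_j ∈ ℝ with λ_j ≠ 0, let 0 < ε < 2, and let e_j ∈ ℝ with |e_j| ≤ ε/4 for all j; set λ̃_j = λ_j(1 + e_j). Define x = ∑_j (β_j/λ_j)·v_j and x̃ = ∑_j (β_j/λ̃_j)·v_j, and assume x ≠ 0. Then ‖x̃ − x‖ ≤ (ε/2)·‖x‖, x̃ ≠ 0, and ‖x̃/‖x̃‖ − x/‖x‖‖ ≤ ε. -/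
lemma orthonormal_norm_sum {ι E : Type*} [Fintype ι]
    [NormedAddCommGroup E] [InnerProductSpace ℂ E]
    {v : ι → E} (hv : Orthonormal ℂ v) (l : ι → ℂ) :
    ‖∑ i, l i • v i‖ ^ 2 = ∑ i, ‖l i‖ ^ 2 := by
  have h := hv.inner_sum l l Finset.univ
  have h2 : ‖∑ i, l i • v i‖ ^ 2 =
      RCLike.re (inner (𝕜 := ℂ) (∑ i, l i • v i) (∑ i, l i • v i)) :=
    ((norm_sq_eq_re_inner (𝕜 := ℂ) _))
  rw [h2, h, map_sum]
  congr 1; ext i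
  rw [RCLike.conj_mul]
  norm_cast

/-- **Multiplicative eigenvalue perturbation bound for the quantum linear
systems problem.**  Let `{v_j}` be a finite orthonormal family in `ℂ^N`,
`β_j ∈ ℂ`, `λ_j ∈ ℝ` nonzero, `0 < ε < 2`, and `|e_j| ≤ ε/4`; set
`λ̃_j = λ_j(1 + e_j)`.  With `x = ∑_j (β_j/λ_j)·v_j ≠ 0` and
`x̃ = ∑_j (β_j/λ̃_j)·v_j`, we have `‖x̃ − x‖ ≤ (ε/2)·‖x‖`, `x̃ ≠ 0`, and
`‖x̃/‖x̃‖ − x/‖x‖‖ ≤ ε`. -/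
theorem qlsp_perturbation {N : ℕ} {J : Type*} [Fintype J]
    (v : J → EuclideanSpace ℂ (Fin N)) (hv : Orthonormal ℂ v)
    (β : J → ℂ) (lam e : J → ℝ)
    (hlam : ∀ j, lam j ≠ 0)
    (ε : ℝ) (hε0 : 0 < ε) (hε2 : ε < 2)
    (he : ∀ j, |e j| ≤ ε / 4)
    (x xt : EuclideanSpace ℂ (Fin N))
    (hx : x = ∑ j, (β j / (lam j : ℂ)) • v j)
    (hxt : xt = ∑ j, (β j / ((lam j * (1 + e j) : ℝ) : ℂ)) • v j)
    (hx0 : x ≠ 0) :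
    ‖xt - x‖ ≤ ε / 2 * ‖x‖ ∧ xt ≠ 0 ∧
      ‖(‖xt‖⁻¹ : ℝ) • xt - (‖x‖⁻¹ : ℝ) • x‖ ≤ ε := by
  have hε4 : ∀ j, (0:ℝ) < 1 + e j := by
    intro j
    have h1 := (abs_le.1 (he j)).1
    linarith
  -- coefficient bound
  have hratio : ∀ j, |e j| / (1 + e j) ≤ ε / 2 := by
    intro j
    rw [div_le_iff₀ (hε4 j)]
    have h1 := (abs_le.1 (he j)).1
    have h2 := he j
    nlinarith [abs_nonneg (e j)]
  set c : J → ℂ := fun j => β j / (lam j : ℂ) with hc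
  set a : J → ℂ := fun j => β j / ((lam j * (1 + e j) : ℝ) : ℂ) - c j with ha
  have hdiff : xt - x = ∑ j, a j • v j := by
    rw [hxt, hx, ← Finset.sum_sub_distrib]
    simp [ha, sub_smul]
    rfl
  have hanorm : ∀ j, ‖a j‖ ≤ ε / 2 * ‖c j‖ := by
    intro j
    have h1 : ((lam j : ℝ) : ℂ) ≠ 0 := by exact_mod_cast hlam j
    have h2 : ((1 + e j : ℝ) : ℂ) ≠ 0 := by exact_mod_cast (hε4 j).ne'
    have hcast : ((lam j * (1 + e j) : ℝ) : ℂ) = ((lam j : ℝ) : ℂ) * ((1 + e j : ℝ) : ℂ) := by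
      push_cast; ring
    have heq : a j = c j * (-(e j : ℂ) / ((1 + e j : ℝ) : ℂ)) := by
      have h2' : (1 : ℂ) + (e j : ℂ) ≠ 0 := by
        intro hz
        apply h2
        push_cast
        exact hz
      have hne : ((lam j : ℝ) : ℂ) + ((lam j : ℝ) : ℂ) * ((e j : ℝ) : ℂ) ≠ 0 := by
        rw [← mul_one_add]
        exact mul_ne_zero h1 h2'
      simp only [ha, hc, hcast]
      push_cast
      field_simp [hne]
      ring
    have h5 : ‖(-(e j : ℂ) / ((1 + e j : ℝ) : ℂ))‖ = |e j| / (1 + e j) := by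
      rw [norm_div, norm_neg, Complex.norm_real, Complex.norm_real, Real.norm_eq_abs,
        Real.norm_eq_abs, abs_of_pos (hε4 j)]
    rw [heq, norm_mul, h5, mul_comm]
    exact mul_le_mul_of_nonneg_right (hratio j) (norm_nonneg _)
  have hxnorm2 : ‖x‖ ^ 2 = ∑ j, ‖c j‖ ^ 2 := by
    rw [hx]; exact orthonormal_norm_sum hv c
  have hdnorm2 : ‖xt - x‖ ^ 2 = ∑ j, ‖a j‖ ^ 2 := by
    rw [hdiff]; exact orthonormal_norm_sum hv a
  have hsq : ‖xt - x‖ ^ 2 ≤ (ε / 2 * ‖x‖) ^ 2 := by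
    rw [hdnorm2, mul_pow, hxnorm2, Finset.mul_sum]
    apply Finset.sum_le_sum
    intro j _
    calc ‖a j‖ ^ 2 ≤ (ε / 2 * ‖c j‖) ^ 2 := by
          apply pow_le_pow_left₀ (norm_nonneg _) (hanorm j)
      _ = (ε / 2) ^ 2 * ‖c j‖ ^ 2 := by ring
  have h1 : ‖xt - x‖ ≤ ε / 2 * ‖x‖ := by
    have hnn : 0 ≤ ε / 2 * ‖x‖ := by positivity
    nlinarith [norm_nonneg (xt - x)]
  have hxpos : 0 < ‖x‖ := norm_pos_iff.mpr hx0
  have hxtpos : 0 < ‖xt‖ := by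
    have h2 := norm_sub_norm_le x xt
    rw [← norm_neg (x - xt), neg_sub] at h2
    nlinarith
  refine ⟨h1, norm_pos_iff.mp hxtpos, ?_⟩
  have hsplit : (‖xt‖⁻¹ : ℝ) • xt - (‖x‖⁻¹ : ℝ) • x
      = (‖x‖⁻¹ : ℝ) • (xt - x) + ((‖xt‖⁻¹ : ℝ) - (‖x‖⁻¹ : ℝ)) • xt := by
    rw [smul_sub, sub_smul]; abel
  have hterm2 : ‖((‖xt‖⁻¹ : ℝ) - (‖x‖⁻¹ : ℝ)) • xt‖ ≤ ‖xt - x‖ / ‖x‖ := by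
    rw [norm_smul, Real.norm_eq_abs]
    have e1 : (‖xt‖⁻¹ : ℝ) - (‖x‖⁻¹ : ℝ) = (‖x‖ - ‖xt‖) / (‖xt‖ * ‖x‖) := by
      field_simp
    have heq : |(‖xt‖⁻¹ : ℝ) - (‖x‖⁻¹ : ℝ)| * ‖xt‖ = |‖x‖ - ‖xt‖| / ‖x‖ := by
      rw [e1, abs_div, abs_mul, abs_of_pos hxtpos, abs_of_pos hxpos]
      field_simp
    rw [heq]
    apply (div_le_div_iff_of_pos_right hxpos).mpr
    calc |‖x‖ - ‖xt‖| ≤ ‖x - xt‖ := abs_norm_sub_norm_le x xt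
      _ = ‖xt - x‖ := by rw [← norm_neg (x - xt), neg_sub]
  calc ‖(‖xt‖⁻¹ : ℝ) • xt - (‖x‖⁻¹ : ℝ) • x‖
      ≤ ‖(‖x‖⁻¹ : ℝ) • (xt - x)‖ + ‖((‖xt‖⁻¹ : ℝ) - (‖x‖⁻¹ : ℝ)) • xt‖ := by
        rw [hsplit]; exact norm_add_le _ _
    _ ≤ ‖xt - x‖ / ‖x‖ + ‖xt - x‖ / ‖x‖ := by
        apply add_le_add _ hterm2
        rw [norm_smul, Real.norm_eq_abs, abs_of_pos (inv_pos.mpr hxpos)]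
        rw [inv_mul_eq_div]
    _ ≤ ε / 2 + ε / 2 := by
        have : ‖xt - x‖ / ‖x‖ ≤ ε / 2 := by
          rw [div_le_iff₀ hxpos]; linarith
        linarith
    _ = ε := by ring
end

section
/- Linear combination of unitaries (LCU lemma): Let N, K be positive integers, let U_i ∈ ℂ^{N×N} be unitary for each i ∈ [K], and let α_i > 0 with ‖α‖₁ = ∑_{i∈[K]} α_i. Set T = ∑_{i∈[K]} α_i·U_i. Let V ∈ ℂ^{K×K} be a unitary matrix whose first column satisfies V_{i,0} = √(α_i)/√(‖α‖₁) for all i ∈ [K]. Let U ∈ ℂ^{(K·N)×(K·N)} be the block-diagonal matrix U = ∑_{i∈[K]} (e_i e_i†) ⊗ U_i, and set W = (V† ⊗ I_N)·U·(V ⊗ I_N). Then for all r, s ∈ [N], W_{(0,r),(0,s)} = (1/‖α‖₁)·T_{r,s}; that is, W is a (‖α‖₁, log₂K)-block-encoding of T. -/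
open scoped Kronecker

/-- **Linear combination of unitaries (LCU lemma).**
Let `U_i ∈ ℂ^{N×N}` be unitary, `α_i > 0`, and `T = ∑_i α_i·U_i`.
Let `V ∈ ℂ^{K×K}` be unitary with first column `V_{i,0} = √(α_i)/√(‖α‖₁)`,
where `‖α‖₁ = ∑_i α_i`.  With the select oracle
`U = ∑_i (e_i e_i†) ⊗ U_i` and `W = (V† ⊗ I)·U·(V ⊗ I)`, the upper-left
`N×N` block of `W` equals `T/‖α‖₁`:
`W_{(0,r),(0,s)} = (1/‖α‖₁)·T_{r,s}` for all `r, s ∈ [N]`. -/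
theorem lcu_lemma (N K : ℕ) (hN : 0 < N) (hK : 0 < K)
    (Us : Fin K → Matrix (Fin N) (Fin N) ℂ)
    (hUs : ∀ i, Us i ∈ Matrix.unitaryGroup (Fin N) ℂ)
    (α : Fin K → ℝ) (hα : ∀ i, 0 < α i)
    (V : Matrix (Fin K) (Fin K) ℂ)
    (hV : V ∈ Matrix.unitaryGroup (Fin K) ℂ)
    (hVcol : ∀ i : Fin K,
      V i ⟨0, hK⟩ = ((Real.sqrt (α i) / Real.sqrt (∑ i', α i') : ℝ) : ℂ)) :
    ∀ r s : Fin N,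
      ((V.conjTranspose ⊗ₖ (1 : Matrix (Fin N) (Fin N) ℂ)) *
          (∑ i, Matrix.single i i (1 : ℂ) ⊗ₖ Us i) *
          (V ⊗ₖ (1 : Matrix (Fin N) (Fin N) ℂ))) (⟨0, hK⟩, r) (⟨0, hK⟩, s) =
        (1 / ((∑ i', α i' : ℝ) : ℂ)) * (∑ i, (α i : ℂ) • Us i) r s := by
  intro r s
  have hS : (0:ℝ) < ∑ i', α i' :=
    Finset.sum_pos (fun i _ => hα i) ⟨⟨0, hK⟩, Finset.mem_univ _⟩
  simp only [Matrix.mul_apply, Matrix.sum_apply, Matrix.kroneckerMap_apply,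
    Matrix.conjTranspose_apply, Fintype.sum_prod_type, Matrix.one_apply,
    Matrix.single, Matrix.of_apply, mul_ite, mul_one, mul_zero, ite_mul, zero_mul,
    one_mul, ite_and, Finset.sum_ite_eq, Finset.sum_ite_eq', Finset.mem_univ, if_true]
  rw [Finset.mul_sum]
  refine Finset.sum_congr rfl fun i _ => ?_
  rw [Finset.sum_comm]
  simp only [Finset.sum_ite_eq, Finset.sum_ite_eq', Finset.mem_univ, if_true]
  rw [hVcol i, Complex.star_def, Complex.conj_ofReal, Matrix.smul_apply]
  rw [mul_comm, ← mul_assoc, ← Complex.ofReal_mul, div_mul_div_comm,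
    Real.mul_self_sqrt (hα i).le, Real.mul_self_sqrt hS.le]
  push_cast
  field_simp
  rw [smul_eq_mul]
end

section
/- Qubitization with a Hermitian block encoding: Let M, N be positive integers and let U ∈ ℂ^{(M·N)×(M·N)}, indexed by pairs (a,i) ∈ [M]×[N], be both unitary and Hermitian. Define A ∈ ℂ^{N×N} by A_{ij} = U_{(0,i),(0,j)} (the upper-left block), and let Z_Π ∈ ℂ^{(M·N)×(M·N)} be the diagonal matrix with (Z_Π)_{(a,i),(a,i)} = 1 if a = 0 and −1 if a ≠ 0. Then for every k ∈ ℕ and all i, j ∈ [N], ((U·Z_Π)^k)_{(0,i),(0,j)} = (T_k(A))_{ij}, where T_k(A) denotes the k-th Chebyshev polynomial of the first kind evaluated at the matrix A. That is, (U·Z_Π)^k is a (1, log₂M)-block-encoding of T_k(A). -/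
/-- **Qubitization with a Hermitian block encoding.**
Let `U ∈ ℂ^{(M·N)×(M·N)}` (indexed by pairs `(a,i) ∈ [M]×[N]`) be unitary and
Hermitian, let `A` be its upper-left block `A_{ij} = U_{(0,i),(0,j)}`, and let
`Z_Π` be the diagonal matrix with entry `1` at ancilla index `0` and `−1`
otherwise.  Then for every `k ∈ ℕ` the upper-left block of `(U·Z_Π)^k` is
`T_k(A)`, the `k`-th Chebyshev polynomial of the first kind evaluated at `A`:
`((U·Z_Π)^k)_{(0,i),(0,j)} = (T_k(A))_{ij}`. -/
theorem qubitization_hermitian_block_encoding (M N : ℕ) (hM : 0 < M) (hN : 0 < N)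
    (U : Matrix (Fin M × Fin N) (Fin M × Fin N) ℂ)
    (hU : U ∈ Matrix.unitaryGroup (Fin M × Fin N) ℂ)
    (hUherm : U.IsHermitian)
    (A : Matrix (Fin N) (Fin N) ℂ)
    (hA : ∀ i j : Fin N, A i j = U (⟨0, hM⟩, i) (⟨0, hM⟩, j))
    (Z : Matrix (Fin M × Fin N) (Fin M × Fin N) ℂ)
    (hZ : Z = Matrix.diagonal fun p => if p.1 = ⟨0, hM⟩ then 1 else -1) :
    ∀ (k : ℕ) (i j : Fin N),
      ((U * Z) ^ k) (⟨0, hM⟩, i) (⟨0, hM⟩, j) =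
        (Polynomial.aeval A (Polynomial.Chebyshev.T ℂ (k : ℤ))) i j := by
  set z : Fin M := ⟨0, hM⟩ with hz
  have hUU : U * U = 1 := by
    have h1 : star U * U = 1 := hU.1
    rwa [show star U = U from hUherm] at h1
  -- Key lemma: multiplying by Z on the right doesn't change the (z, ·) columns
  have hXZ : ∀ (X : Matrix (Fin M × Fin N) (Fin M × Fin N) ℂ) (i j : Fin N),
      (X * Z) (z, i) (z, j) = X (z, i) (z, j) := by
    intro X i j
    rw [hZ, Matrix.mul_diagonal]
    simp
  suffices h : ∀ k : ℕ,
      (∀ i j : Fin N, ((U * Z) ^ k) (z, i) (z, j)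
          = (Polynomial.aeval A (Polynomial.Chebyshev.T ℂ (k : ℤ))) i j) ∧
      (∀ i j : Fin N, ((U * Z) ^ k * U) (z, i) (z, j)
          = (Polynomial.aeval A (Polynomial.Chebyshev.T ℂ ((k : ℤ) + 1))) i j) by
    intro k i j
    exact (h k).1 i j
  intro k
  induction k with
  | zero =>
    constructor
    · intro i j
      simp [Matrix.one_apply, Prod.ext_iff, Matrix.one_apply, Polynomial.Chebyshev.T_zero]
    · intro i j
      simp only [pow_zero, one_mul, Nat.cast_zero, zero_add]
      rw [Polynomial.Chebyshev.T_one, Polynomial.aeval_X]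
      exact (hA i j).symm
  | succ n ih =>
    have hf : ∀ i j : Fin N, ((U * Z) ^ (n + 1)) (z, i) (z, j)
        = (Polynomial.aeval A (Polynomial.Chebyshev.T ℂ ((n : ℤ) + 1))) i j := by
      intro i j
      have : (U * Z) ^ (n + 1) = ((U * Z) ^ n * U) * Z := by
        rw [pow_succ, mul_assoc]
      rw [this, hXZ]
      exact ih.2 i j
    constructor
    · intro i j
      rw [hf i j]
      norm_cast
    · intro i j
      have hexp : (U * Z) ^ (n + 1) * U = (((U * Z) ^ n * U) * Z) * U := by
        rw [pow_succ]
        noncomm_ring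
      rw [hexp]
      set X := (U * Z) ^ n * U with hX
      have hsum : ((X * Z) * U) (z, i) (z, j)
          = ∑ p : Fin M × Fin N, X (z, i) p * (if p.1 = z then (1:ℂ) else -1) * U p (z, j) := by
        rw [Matrix.mul_apply]
        congr 1
        ext p
        rw [hZ, Matrix.mul_diagonal]
      rw [hsum]
      have hsplit : ∀ p : Fin M × Fin N,
          X (z, i) p * (if p.1 = z then (1:ℂ) else -1) * U p (z, j)
          = (if p.1 = z then 2 * (X (z, i) p * U p (z, j)) else 0)
            - X (z, i) p * U p (z, j) := by
        intro p
        by_cases hp : p.1 = z <;> simp [hp] <;> ring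
      rw [Finset.sum_congr rfl (fun p _ => hsplit p), Finset.sum_sub_distrib]
      have h2 : ∑ p : Fin M × Fin N, X (z, i) p * U p (z, j) = (X * U) (z, i) (z, j) := by
        rw [Matrix.mul_apply]
      have hXU : X * U = (U * Z) ^ n := by
        rw [hX, mul_assoc, hUU, mul_one]
      have h1 : ∑ p : Fin M × Fin N,
          (if p.1 = z then 2 * (X (z, i) p * U p (z, j)) else 0)
          = 2 * ∑ l : Fin N, X (z, i) (z, l) * U (z, l) (z, j) := by
        rw [Fintype.sum_prod_type]
        have hinner : ∀ x : Fin M,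
            (∑ l : Fin N, if (x, l).1 = z then 2 * (X (z, i) (x, l) * U (x, l) (z, j)) else 0)
            = if x = z then ∑ l : Fin N, 2 * (X (z, i) (x, l) * U (x, l) (z, j)) else 0 := by
          intro x
          by_cases hx : x = z <;> simp [hx]
        rw [Finset.sum_congr rfl (fun x _ => hinner x),
          Finset.sum_ite_eq' Finset.univ z
            (fun x => ∑ l : Fin N, 2 * (X (z, i) (x, l) * U (x, l) (z, j)))]
        simp [Finset.mul_sum]
      rw [h1, h2, hXU, ih.1 i j]
      have hl : ∑ l : Fin N, X (z, i) (z, l) * U (z, l) (z, j)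
          = ((Polynomial.aeval A (Polynomial.Chebyshev.T ℂ ((n : ℤ) + 1))) * A) i j := by
        rw [Matrix.mul_apply]
        congr 1
        ext l
        rw [ih.2 i l, hA l j]
      rw [hl]
      have hT : Polynomial.Chebyshev.T ℂ (((n : ℕ) + 1 : ℕ) + 1 : ℤ)
          = 2 * Polynomial.Chebyshev.T ℂ ((n : ℤ) + 1) * Polynomial.X
            - Polynomial.Chebyshev.T ℂ (n : ℤ) := by
        push_cast
        rw [show ((n : ℤ) + 1 + 1) = (n : ℤ) + 2 from by ring, Polynomial.Chebyshev.T_add_two]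
        ring
      rw [hT]
      rw [map_sub, map_mul, map_mul, Polynomial.aeval_X, map_ofNat, Matrix.sub_apply]
      rw [show ((2 : Matrix (Fin N) (Fin N) ℂ)
            * Polynomial.aeval A (Polynomial.Chebyshev.T ℂ ((n : ℤ) + 1)) * A)
          = (2 : ℂ) • (Polynomial.aeval A (Polynomial.Chebyshev.T ℂ ((n : ℤ) + 1)) * A) from by
        rw [mul_assoc, two_mul, two_smul]]
      rw [Matrix.smul_apply, smul_eq_mul]
end

section
/- Qubitization/quantum singular value transformation for even Chebyshev polynomials with a general block encoding: Let M, N be positive integers and let U ∈ ℂ^{(M·N)×(M·N)}, indexed by pairs (a,i) ∈ [M]×[N], be unitary. Define A ∈ ℂ^{N×N} by A_{ij} = U_{(0,i),(0,j)} (the upper-left block), and let Z_Π be the diagonal matrix with (Z_Π)_{(a,i),(a,i)} = 1 if a = 0 and −1 if a ≠ 0. Then for every k ∈ ℕ and all i, j ∈ [N], ((U†·Z_Π·U·Z_Π)^k)_{(0,i),(0,j)} = (T_k(2·A†A − I))_{ij}, where T_k is the k-th Chebyshev polynomial of the first kind evaluated at the matrix 2A†A − I. Equivalently, since T_{2k}(σ)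 = T_k(2σ² − 1), the upper-left block of (U†Z_Π U Z_Π)^k is the singular value transformation T_{2k}^▷(A) = V·T_{2k}(Σ)·V† where A = WΣV† is a singular value decomposition. -/
/-!
With `e` the isometric inclusion of the ancilla-`0` block, `Z_Π = 2 e e† - 1` is a reflection and
`R = U† Z_Π U` an involution, so `W = R Z_Π` has inverse `Z_Π R`. Since `e† Z_Π = e†`, the
compression `e† (W + W⁻¹) = 2 (e† R e) e†` factors through `e†`, and
`W^{k+2} = (W + W⁻¹) W^{k+1} - W^k` becomes the Chebyshev recurrence
`D_{k+2} = 2 X D_{k+1} - D_k` for `D_k = e† W^k e`, where `X = D_1 = e† R e = 2 A†A - 1`.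
-/

open Matrix Polynomial

theorem Polynomial.Chebyshev.aeval_T_natCast_eq_of_recurrence {R A : Type*} [CommRing R] [Ring A]
    [Algebra R A] (x : A) (d : ℕ → A) (h0 : d 0 = 1) (h1 : d 1 = x)
    (hstep : ∀ k, d (k + 2) = 2 * x * d (k + 1) - d k) (k : ℕ) :
    aeval x (Chebyshev.T R k) = d k := by
  induction k using Nat.twoStepInduction with
  | zero => simp [h0]
  | one => simp [h1]
  | more k ih₀ ih₁ =>
    push_cast at ih₁ ⊢
    rw [Chebyshev.T_add_two, map_sub, map_mul, map_mul, map_ofNat, aeval_X, ih₀, ih₁, hstep]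

namespace Matrix

variable {m n R : Type*} [CommRing R]

def reflection [Fintype n] [DecidableEq m] (e : Matrix m n R) (f : Matrix n m R) : Matrix m m R :=
  (2 : R) • (e * f) - 1

section Reflection

variable [Fintype m] [DecidableEq m] [Fintype n] [DecidableEq n] {e : Matrix m n R}
  {f : Matrix n m R}

theorem mul_reflection (hfe : f * e = 1) : f * reflection e f = f := by
  rw [reflection, Matrix.mul_sub, Matrix.mul_smul, ← Matrix.mul_assoc, hfe, Matrix.one_mul,
    Matrix.mul_one, two_smul, add_sub_cancel_right]

theorem reflection_mul (hfe : f * e = 1) : reflection e f * e = e := by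
  rw [reflection, Matrix.sub_mul, Matrix.smul_mul, Matrix.mul_assoc, hfe, Matrix.mul_one,
    Matrix.one_mul, two_smul, add_sub_cancel_right]

theorem reflection_mul_self (hfe : f * e = 1) : reflection e f * reflection e f = 1 := by
  nth_rewrite 2 [reflection]
  rw [Matrix.mul_sub, Matrix.mul_smul, ← Matrix.mul_assoc, reflection_mul hfe, Matrix.mul_one,
    reflection, sub_sub_cancel]

theorem compression_conj_reflection (hfe : f * e = 1) {V V' : Matrix m m R} (hV : V' * V = 1) :
    f * (V' * reflection e f * V) * e = (2 : R) • ((f * V' * e) * (f * V * e)) - 1 := by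
  simp only [reflection, Matrix.mul_sub, Matrix.sub_mul, Matrix.mul_smul, Matrix.smul_mul,
    Matrix.mul_one, Matrix.mul_assoc, hV]
  rw [hfe]

theorem compression_pow_mul_reflection (hfe : f * e = 1) {V : Matrix m m R} (hV : V * V = 1)
    (k : ℕ) : f * (V * reflection e f) ^ k * e = aeval (f * V * e) (Chebyshev.T R k) := by
  set S := reflection e f
  set W := V * S
  have hinv : S * V * W = 1 := by
    rw [Matrix.mul_assoc, ← Matrix.mul_assoc V, hV, Matrix.one_mul, reflection_mul_self hfe]
  -- `S * V` inverts `W`, and the compression of `W + W⁻¹` factors through `f`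
  have hsum : f * (W + S * V) = (2 : R) • (f * V * e * f) := by
    rw [Matrix.mul_add, ← Matrix.mul_assoc f S, mul_reflection hfe, ← Matrix.mul_assoc,
      ← Matrix.mul_one (f * V), Matrix.mul_assoc, ← Matrix.mul_add, Matrix.one_mul]
    simp only [S, reflection, sub_add_cancel, Matrix.mul_smul, Matrix.mul_assoc, Matrix.one_mul]
  refine (Chebyshev.aeval_T_natCast_eq_of_recurrence _ (fun k => f * W ^ k * e) ?_ ?_ ?_ k).symm
  · simpa using hfe
  · simp only [pow_one, W, S, Matrix.mul_assoc, reflection_mul hfe]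
  · intro k
    have hpow : W ^ (k + 2) = (W + S * V) * W ^ (k + 1) - W ^ k := by
      have hcancel : S * V * W ^ (k + 1) = W ^ k := by
        rw [pow_succ', ← mul_assoc, hinv, one_mul]
      rw [add_mul, hcancel, ← pow_succ', add_sub_cancel_right]
    calc f * W ^ (k + 2) * e = f * (W + S * V) * (W ^ (k + 1) * e) - f * W ^ k * e := by
          rw [hpow, Matrix.mul_sub, Matrix.sub_mul, Matrix.mul_assoc, Matrix.mul_assoc,
            Matrix.mul_assoc, Matrix.mul_assoc]
      _ = 2 * (f * V * e) * (f * W ^ (k + 1) * e) - f * W ^ k * e := by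
          rw [hsum, two_smul, two_mul, Matrix.add_mul, Matrix.add_mul]
          simp only [Matrix.mul_assoc]

end Reflection

theorem one_submatrix_mul_mul_one_submatrix [Fintype m] [DecidableEq m] (ι : n → m)
    (B : Matrix m m R) :
    (1 : Matrix m m R).submatrix ι id * B * (1 : Matrix m m R).submatrix id ι = B.submatrix ι ι := by
  ext i j
  simp [mul_apply, one_apply]

theorem one_submatrix_prodMk_mul_one_submatrix_prodMk {α : Type*} [Fintype α] [DecidableEq α]
    [Fintype n] [DecidableEq n] (a : α) :
    (1 : Matrix (α × n) (α × n) R).submatrix id (Prod.mk a) *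
      (1 : Matrix (α × n) (α × n) R).submatrix (Prod.mk a) id =
        diagonal fun p => if p.1 = a then 1 else 0 := by
  ext ⟨b, i⟩ ⟨c, j⟩
  simp only [mul_apply, submatrix_apply, id, one_apply, Prod.mk.injEq, diagonal_apply]
  by_cases hb : b = a
  · subst hb; by_cases hc : b = c <;> simp [hc]
  · simp [hb]

theorem reflection_one_submatrix_prodMk {α : Type*} [Fintype α] [DecidableEq α] [Fintype n]
    [DecidableEq n] (a : α) :
    reflection ((1 : Matrix (α × n) (α × n) R).submatrix id (Prod.mk a))
      ((1 : Matrix (α × n) (α × n) R).submatrix (Prod.mk a) id) =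
        diagonal fun p => if p.1 = a then 1 else -1 := by
  rw [reflection, one_submatrix_prodMk_mul_one_submatrix_prodMk, ← diagonal_one, ← diagonal_smul,
    diagonal_sub]
  congr 1
  ext p
  by_cases h : p.1 = a <;> simp [h]
  norm_num

end Matrix

theorem qsvt_even_chebyshev_block_encoding_general (M N : ℕ) (hM : 0 < M)
    (U : Matrix (Fin M × Fin N) (Fin M × Fin N) ℂ)
    (hU : U ∈ Matrix.unitaryGroup (Fin M × Fin N) ℂ)
    (A : Matrix (Fin N) (Fin N) ℂ)
    (hA : ∀ i j : Fin N, A i j = U (⟨0, hM⟩, i) (⟨0, hM⟩, j))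
    (Z : Matrix (Fin M × Fin N) (Fin M × Fin N) ℂ)
    (hZ : Z = Matrix.diagonal fun p => if p.1 = ⟨0, hM⟩ then 1 else -1) :
    ∀ (k : ℕ) (i j : Fin N),
      ((U.conjTranspose * Z * U * Z) ^ k) (⟨0, hM⟩, i) (⟨0, hM⟩, j) =
        (Polynomial.aeval ((2 : ℂ) • (A.conjTranspose * A) - 1)
          (Polynomial.Chebyshev.T ℂ (k : ℤ))) i j := by
  intro k i j
  set e := (1 : Matrix (Fin M × Fin N) (Fin M × Fin N) ℂ).submatrix id (Prod.mk ⟨0, hM⟩)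
  have he : eᴴ = (1 : Matrix (Fin M × Fin N) (Fin M × Fin N) ℂ).submatrix (Prod.mk ⟨0, hM⟩) id := by
    simp [e, conjTranspose_submatrix]
  have hcompress (B : Matrix (Fin M × Fin N) (Fin M × Fin N) ℂ) :
      eᴴ * B * e = B.submatrix (Prod.mk ⟨0, hM⟩) (Prod.mk ⟨0, hM⟩) := by
    rw [he, one_submatrix_mul_mul_one_submatrix]
  have hfe : eᴴ * e = 1 := by
    simpa using (hcompress 1).trans (submatrix_one _ (Prod.mk_right_injective _))
  obtain rfl : Z = reflection e eᴴ := by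
    rw [hZ, he, reflection_one_submatrix_prodMk]
  have hAU : A = eᴴ * U * e := by
    ext i j
    rw [hcompress, submatrix_apply, hA]
  have hUU : Uᴴ * U = 1 := mem_unitaryGroup_iff'.mp hU
  have hUU' : U * Uᴴ = 1 := mem_unitaryGroup_iff.mp hU
  have hinvol : Uᴴ * reflection e eᴴ * U * (Uᴴ * reflection e eᴴ * U) = 1 := by
    simp only [Matrix.mul_assoc]
    rw [← Matrix.mul_assoc U, hUU', Matrix.one_mul, ← Matrix.mul_assoc (reflection e eᴴ),
      reflection_mul_self hfe, Matrix.one_mul, hUU]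
  have hblock : eᴴ * (Uᴴ * reflection e eᴴ * U) * e = (2 : ℂ) • (Aᴴ * A) - 1 := by
    rw [compression_conj_reflection hfe hUU, hAU]
    simp only [conjTranspose_mul, conjTranspose_conjTranspose, Matrix.mul_assoc]
  rw [← hblock, ← compression_pow_mul_reflection hfe hinvol, hcompress, submatrix_apply]

/-- **Qubitization / quantum singular value transformation for even Chebyshev
polynomials with a general block encoding.**
Let `U ∈ ℂ^{(M·N)×(M·N)}` (indexed by pairs `(a,i) ∈ [M]×[N]`) be unitary,
let `A` be its upper-left block `A_{ij} = U_{(0,i),(0,j)}`, and let `Z_Π` be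
the diagonal matrix with entry `1` at ancilla index `0` and `−1` otherwise.
Then for every `k ∈ ℕ` the upper-left block of `(U†·Z_Π·U·Z_Π)^k` is
`T_k(2·A†A − I)`:
`((U†·Z_Π·U·Z_Π)^k)_{(0,i),(0,j)} = (T_k(2A†A − I))_{ij}`. -/
theorem qsvt_even_chebyshev_block_encoding (M N : ℕ) (hM : 0 < M) (hN : 0 < N)
    (U : Matrix (Fin M × Fin N) (Fin M × Fin N) ℂ)
    (hU : U ∈ Matrix.unitaryGroup (Fin M × Fin N) ℂ)
    (A : Matrix (Fin N) (Fin N) ℂ)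
    (hA : ∀ i j : Fin N, A i j = U (⟨0, hM⟩, i) (⟨0, hM⟩, j))
    (Z : Matrix (Fin M × Fin N) (Fin M × Fin N) ℂ)
    (hZ : Z = Matrix.diagonal fun p => if p.1 = ⟨0, hM⟩ then 1 else -1) :
    ∀ (k : ℕ) (i j : Fin N),
      ((U.conjTranspose * Z * U * Z) ^ k) (⟨0, hM⟩, i) (⟨0, hM⟩, j) =
        (Polynomial.aeval ((2 : ℂ) • (A.conjTranspose * A) - 1)
          (Polynomial.Chebyshev.T ℂ (k : ℤ))) i j :=
  qsvt_even_chebyshev_block_encoding_general M N hM U hU A hA Z hZ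
end

section
/- Quantum signal processing, existence of the polynomial representation: Let d ∈ ℕ and Φ = (φ_0, …, φ_d) ∈ ℝ^{d+1}. For x ∈ [−1,1] define the 2×2 complex matrices O(x) = [[x, −√(1−x²)],[√(1−x²), x]] and E(φ) = [[e^{iφ}, 0],[0, e^{−iφ}]], and set U_Φ(x) = E(φ_0)·∏_{j=1}^{d} (O(x)·E(φ_j)). Then there exist polynomials P, Q ∈ ℂ[x] such that: (1) deg(P) ≤ d and deg(Q) ≤ d−1 (where Q = 0 is allowed); (2) P(−x) = (−1)^d·P(x) and Q(−x) = (−1)^{d−1}·Q(x) for all x (i.e., P has parity d mod 2 and Q has parity d−1 mod 2); (3) |P(x)|² + (1−x²)·|Q(x)|² = 1 for all x ∈ [−1,1]; and for all x ∈ [−1,1], U_Φ(x) = [[P(x), −Q(x)·√(1−x²)],[conj(Q(x))·√(1−x²), conj(P(x))]]. -/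
/-- The signal operator `O(x) = [[x, −√(1−x²)],[√(1−x²), x]]` of quantum signal
processing, as a `2×2` complex matrix. -/
noncomputable def qspO (x : ℝ) : Matrix (Fin 2) (Fin 2) ℂ :=
  !![(x : ℂ), -((Real.sqrt (1 - x ^ 2) : ℝ) : ℂ);
     ((Real.sqrt (1 - x ^ 2) : ℝ) : ℂ), (x : ℂ)]

/-- The phase operator `E(φ) = [[e^{iφ}, 0],[0, e^{−iφ}]]` of quantum signal
processing. -/
noncomputable def qspE (φ : ℝ) : Matrix (Fin 2) (Fin 2) ℂ :=
  !![Complex.exp ((φ : ℂ) * Complex.I), 0;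
     0, Complex.exp (-((φ : ℂ) * Complex.I))]

open Polynomial in
/-- Auxiliary degree bound for the new `P` in the inductive step. -/
lemma qsp_degP' (d : ℕ) (P Q : ℂ[X]) (e1 : ℂ) (hPd : P.degree ≤ (d : ℕ))
    (hQd : Q.degree < (d : ℕ)) :
    (Polynomial.C e1 * (X * P - (1 - X ^ 2) * Q)).degree ≤ ((d + 1 : ℕ) : WithBot ℕ) := by
  have h1 : (X * P : ℂ[X]).degree ≤ ((d + 1 : ℕ) : WithBot ℕ) := by
    refine (degree_mul_le _ _).trans ?_
    rw [degree_X]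
    calc (1 : WithBot ℕ) + P.degree ≤ 1 + (d : ℕ) := add_le_add_right hPd 1
      _ = ((d + 1 : ℕ) : WithBot ℕ) := by push_cast; ring
  have h2 : ((1 - X ^ 2) * Q : ℂ[X]).degree ≤ ((d + 1 : ℕ) : WithBot ℕ) := by
    refine (degree_mul_le _ _).trans ?_
    have hd2 : (1 - X ^ 2 : ℂ[X]).degree ≤ 2 :=
      (degree_sub_le _ _).trans (by simp [degree_X_pow])
    have hq1 : Q.degree + 1 ≤ ((d : ℕ) : WithBot ℕ) := Nat.WithBot.add_one_le_of_lt hQd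
    calc (1 - X ^ 2 : ℂ[X]).degree + Q.degree ≤ 2 + Q.degree := add_le_add_left hd2 _
      _ = (Q.degree + 1) + 1 := by ring
      _ ≤ ((d : ℕ) : WithBot ℕ) + 1 := add_le_add_left hq1 1
      _ = ((d + 1 : ℕ) : WithBot ℕ) := by push_cast; ring
  refine (degree_mul_le _ _).trans ?_
  have := add_le_add (degree_C_le (a := e1)) ((degree_sub_le _ _).trans (max_le h1 h2))
  simpa using this

open Polynomial in
/-- Auxiliary degree bound for the new `Q` in the inductive step. -/
lemma qsp_degQ' (d : ℕ) (P Q : ℂ[X]) (e2 : ℂ) (hPd : P.degree ≤ (d : ℕ))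
    (hQd : Q.degree < (d : ℕ)) :
    (Polynomial.C e2 * (P + X * Q)).degree < ((d + 1 : ℕ) : WithBot ℕ) := by
  have hq1 : Q.degree + 1 ≤ ((d : ℕ) : WithBot ℕ) := Nat.WithBot.add_one_le_of_lt hQd
  have h3 : (P + X * Q : ℂ[X]).degree ≤ ((d : ℕ) : WithBot ℕ) := by
    refine (degree_add_le _ _).trans (max_le hPd ?_)
    refine (degree_mul_le _ _).trans ?_
    rw [degree_X]
    calc (1 : WithBot ℕ) + Q.degree = Q.degree + 1 := by ring
      _ ≤ ((d : ℕ) : WithBot ℕ) := hq1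
  have h4 : (Polynomial.C e2 * (P + X * Q)).degree ≤ ((d : ℕ) : WithBot ℕ) := by
    refine (degree_mul_le _ _).trans ?_
    simpa using add_le_add (degree_C_le (a := e2)) h3
  exact lt_of_le_of_lt h4 (by exact_mod_cast Nat.lt_succ_self d)

/-- Auxiliary normalization step. -/
lemma qsp_step_norm (x : ℝ) (a b : ℂ) (ψ : ℝ)
    (h : ‖a‖ ^ 2 + (1 - x ^ 2) * ‖b‖ ^ 2 = 1) :
    ‖Complex.exp ((ψ : ℂ) * Complex.I) * ((x : ℂ) * a - (1 - (x : ℂ) ^ 2) * b)‖ ^ 2 +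
      (1 - x ^ 2) *
        ‖Complex.exp (-((ψ : ℂ) * Complex.I)) * (a + (x : ℂ) * b)‖ ^ 2 = 1 := by
  have h1 : ‖Complex.exp ((ψ : ℂ) * Complex.I)‖ = 1 :=
    Complex.norm_exp_ofReal_mul_I ψ
  have h2 : ‖Complex.exp (-((ψ : ℂ) * Complex.I))‖ = 1 := by
    rw [show -((ψ : ℂ) * Complex.I) = ((-ψ : ℝ) : ℂ) * Complex.I by push_cast; ring]
    exact Complex.norm_exp_ofReal_mul_I (-ψ)
  rw [norm_mul, norm_mul, h1, h2, one_mul, one_mul]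
  rw [Complex.sq_norm, Complex.sq_norm] at h ⊢
  simp only [Complex.normSq_apply, Complex.sub_re, Complex.sub_im, Complex.add_re,
    Complex.add_im, Complex.mul_re, Complex.mul_im, Complex.ofReal_re, Complex.ofReal_im,
    Complex.one_re, Complex.one_im, Complex.ofReal_pow, pow_two] at h ⊢
  ring_nf at h ⊢
  nlinarith [h]

open Polynomial Complex in
/-- Auxiliary matrix step. -/
lemma qsp_step_mat (x ψ : ℝ) (hx : x ∈ Set.Icc (-1 : ℝ) 1) (a b : ℂ) :
    !![a, -(b * ((Real.sqrt (1 - x ^ 2) : ℝ) : ℂ));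
       (starRingEnd ℂ) b * ((Real.sqrt (1 - x ^ 2) : ℝ) : ℂ), (starRingEnd ℂ) a]
      * (qspO x * qspE ψ) =
    !![Complex.exp ((ψ : ℂ) * Complex.I) * ((x : ℂ) * a - (1 - (x : ℂ) ^ 2) * b),
       -(Complex.exp (-((ψ : ℂ) * Complex.I)) * (a + (x : ℂ) * b) *
          ((Real.sqrt (1 - x ^ 2) : ℝ) : ℂ));
       (starRingEnd ℂ) (Complex.exp (-((ψ : ℂ) * Complex.I)) * (a + (x : ℂ) * b)) *
          ((Real.sqrt (1 - x ^ 2) : ℝ) : ℂ),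
       (starRingEnd ℂ) (Complex.exp ((ψ : ℂ) * Complex.I) *
          ((x : ℂ) * a - (1 - (x : ℂ) ^ 2) * b))] := by
  have h0 : (0 : ℝ) ≤ 1 - x ^ 2 := by obtain ⟨h1, h2⟩ := hx; nlinarith
  set s : ℂ := ((Real.sqrt (1 - x ^ 2) : ℝ) : ℂ) with hs
  have hss : s * s = 1 - (x : ℂ) ^ 2 := by
    rw [hs, ← Complex.ofReal_mul, Real.mul_self_sqrt h0]; push_cast; ring
  have hce1 : (starRingEnd ℂ) (Complex.exp ((ψ : ℂ) * Complex.I)) =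
      Complex.exp (-((ψ : ℂ) * Complex.I)) := by
    rw [← Complex.exp_conj]; simp
  have hce2 : (starRingEnd ℂ) (Complex.exp (-((ψ : ℂ) * Complex.I))) =
      Complex.exp ((ψ : ℂ) * Complex.I) := by
    rw [← Complex.exp_conj]; simp
  rw [qspO, qspE, ← mul_assoc, Matrix.mul_fin_two, Matrix.mul_fin_two]
  set e1 := Complex.exp ((ψ : ℂ) * Complex.I)
  set e2 := Complex.exp (-((ψ : ℂ) * Complex.I))
  simp only [map_mul, map_add, map_sub, map_one, map_pow, map_neg, Complex.conj_ofReal,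
    hce1, hce2]
  ext i j
  fin_cases i <;> fin_cases j <;>
    simp only [Fin.mk_zero, Fin.mk_one, Matrix.cons_val', Matrix.cons_val_zero,
      Matrix.cons_val_one, Matrix.head_cons, Matrix.head_fin_const, Matrix.empty_val',
      Matrix.cons_val_fin_one, Matrix.of_apply]
  · linear_combination (-(e1 * b)) * hss
  · ring
  · ring
  · linear_combination (-(e2 * ((starRingEnd ℂ) b))) * hss

/-- **Quantum signal processing, existence of the polynomial representation.**
For any phase factors `Φ = (φ_0, …, φ_d) ∈ ℝ^{d+1}`, there exist polynomials
`P, Q ∈ ℂ[x]` with `deg P ≤ d`, `deg Q ≤ d−1` (i.e. `deg Q < d`, `Q = 0`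
allowed), `P` of parity `d mod 2` and `Q` of parity `d−1 mod 2`,
`|P(x)|² + (1−x²)|Q(x)|² = 1` on `[−1,1]`, such that for all `x ∈ [−1,1]`,
`E(φ_0)·∏_{j=1}^d (O(x)·E(φ_j)) = [[P(x), −Q(x)√(1−x²)],[conj(Q(x))√(1−x²), conj(P(x))]]`. -/
theorem qsp_existence (d : ℕ) (φ : Fin (d + 1) → ℝ) :
    ∃ P Q : Polynomial ℂ,
      P.degree ≤ (d : ℕ) ∧
      Q.degree < (d : ℕ) ∧
      (∀ z : ℂ, P.eval (-z) = (-1) ^ d * P.eval z) ∧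
      (∀ z : ℂ, Q.eval (-z) = (-1) ^ (d + 1) * Q.eval z) ∧
      (∀ x : ℝ, x ∈ Set.Icc (-1 : ℝ) 1 →
        ‖P.eval (x : ℂ)‖ ^ 2 +
            (1 - x ^ 2) * ‖Q.eval (x : ℂ)‖ ^ 2 = 1) ∧
      (∀ x : ℝ, x ∈ Set.Icc (-1 : ℝ) 1 →
        qspE (φ 0) * (List.ofFn fun j : Fin d => qspO x * qspE (φ j.succ)).prod =
          !![P.eval (x : ℂ),
              -(Q.eval (x : ℂ) * ((Real.sqrt (1 - x ^ 2) : ℝ) : ℂ));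
            (starRingEnd ℂ) (Q.eval (x : ℂ)) * ((Real.sqrt (1 - x ^ 2) : ℝ) : ℂ),
              (starRingEnd ℂ) (P.eval (x : ℂ))]) := by
  induction d with
  | zero =>
    refine ⟨Polynomial.C (Complex.exp ((φ 0 : ℂ) * Complex.I)), 0,
      Polynomial.degree_C_le, ?_, ?_, ?_, ?_, ?_⟩
    · exact_mod_cast WithBot.bot_lt_coe 0
    · intro z; simp
    · intro z; simp
    · intro x _; simp [Complex.norm_exp_ofReal_mul_I]
    · intro x _
      have hc : (starRingEnd ℂ) (Complex.exp ((φ 0 : ℂ) * Complex.I)) =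
          Complex.exp (-((φ 0 : ℂ) * Complex.I)) := by
        rw [← Complex.exp_conj]; simp
      simp only [List.ofFn_zero, List.prod_nil, mul_one, qspE, Polynomial.eval_C,
        Polynomial.eval_zero, map_zero, zero_mul, neg_zero, hc]
  | succ d ih =>
    obtain ⟨P, Q, hPd, hQd, hPp, hQp, hn, hm⟩ := ih (φ ∘ Fin.castSucc)
    obtain ⟨ψ, hψ⟩ : ∃ ψ : ℝ, φ (Fin.last (d + 1)) = ψ := ⟨_, rfl⟩
    refine ⟨Polynomial.C (Complex.exp ((ψ : ℂ) * Complex.I)) *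
        (Polynomial.X * P - (1 - Polynomial.X ^ 2) * Q),
      Polynomial.C (Complex.exp (-((ψ : ℂ) * Complex.I))) * (P + Polynomial.X * Q),
      qsp_degP' d P Q _ hPd hQd, qsp_degQ' d P Q _ hPd hQd, ?_, ?_, ?_, ?_⟩
    · intro z
      simp only [Polynomial.eval_mul, Polynomial.eval_C, Polynomial.eval_sub,
        Polynomial.eval_add, Polynomial.eval_one, Polynomial.eval_pow, Polynomial.eval_X,
        hPp z, hQp z]
      ring
    · intro z
      simp only [Polynomial.eval_mul, Polynomial.eval_C, Polynomial.eval_sub,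
        Polynomial.eval_add, Polynomial.eval_one, Polynomial.eval_pow, Polynomial.eval_X,
        hPp z, hQp z]
      ring
    · intro x hx
      simp only [Polynomial.eval_mul, Polynomial.eval_C, Polynomial.eval_sub,
        Polynomial.eval_add, Polynomial.eval_one, Polynomial.eval_pow, Polynomial.eval_X]
      exact qsp_step_norm x (P.eval (x : ℂ)) (Q.eval (x : ℂ)) ψ (hn x hx)
    · intro x hx
      have hlist : (List.ofFn fun j : Fin (d + 1) => qspO x * qspE (φ j.succ)) =
          (List.ofFn fun j : Fin d =>
            qspO x * qspE ((φ ∘ Fin.castSucc) j.succ)).concat (qspO x * qspE ψ) := by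
        rw [List.ofFn_succ', Fin.succ_last, hψ]
        simp only [Function.comp_apply, Fin.succ_castSucc]
      have h0 : (φ ∘ Fin.castSucc) 0 = φ 0 := by
        simp [Function.comp_apply]
      rw [hlist, List.prod_concat, ← mul_assoc, ← h0, hm x hx]
      simp only [Polynomial.eval_mul, Polynomial.eval_C, Polynomial.eval_sub,
        Polynomial.eval_add, Polynomial.eval_one, Polynomial.eval_pow, Polynomial.eval_X]
      exact qsp_step_mat x ψ hx (P.eval (x : ℂ)) (Q.eval (x : ℂ))
end

section
/- Quantum signal processing, converse (realizability of admissible polynomial pairs): Let d ∈ ℕ and let P, Q ∈ ℂ[x] satisfy: (1) deg(P) ≤ d and deg(Q) ≤ d−1 (where Q = 0 is allowed); (2) P(−x) = (−1)^d·P(x) and Q(−x) = (−1)^{d−1}·Q(x) for all x; (3) |P(x)|² + (1−x²)·|Q(x)|² = 1 for all x ∈ [−1,1]. Then there exists a tuple of phase factors Φ = (φ_0, …, φ_d) ∈ ℝ^{d+1} such that for all x ∈ [−1,1], E(φ_0)·∏_{j=1}^{d} (O(x)·E(φ_j)) = [[P(x), −Q(x)·√(1−x²)],[conj(Q(x))·√(1−x²),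 conj(P(x))]], where O(x) = [[x, −√(1−x²)],[√(1−x²), x]] and E(φ) = [[e^{iφ}, 0],[0, e^{−iφ}]]. -/
open Polynomial

lemma qsp_eval_map_conj' (p : Polynomial ℂ) (z : ℂ) :
    (p.map (starRingEnd ℂ)).eval z = starRingEnd ℂ (p.eval (starRingEnd ℂ z)) := by
  conv_lhs => rw [show z = starRingEnd ℂ (starRingEnd ℂ z) by simp]
  rw [eval_map, eval₂_at_apply]

lemma qsp_eval_map_conj (p : Polynomial ℂ) (x : ℝ) :
    (p.map (starRingEnd ℂ)).eval (x:ℂ) = starRingEnd ℂ (p.eval (x:ℂ)) := by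
  rw [qsp_eval_map_conj', Complex.conj_ofReal]

lemma qsp_coeff_comp_neg_X (p : Polynomial ℂ) (k : ℕ) :
    (p.comp (-X)).coeff k = (-1)^k * p.coeff k := by
  induction p using Polynomial.induction_on' with
  | add f g hf hg => simp [add_comp, hf, hg, mul_add]
  | monomial n a =>
    rw [monomial_comp, neg_pow, ← C_mul_X_pow_eq_monomial,
      show ((-1 : Polynomial ℂ)) = C (-1) by simp, ← C_pow]
    simp only [← mul_assoc, ← C_mul, coeff_C_mul, coeff_X_pow]
    by_cases h : k = n <;> simp [h, mul_comm]

lemma qsp_coeff_parity (p : Polynomial ℂ) (m : ℕ)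
    (h : ∀ z : ℂ, p.eval (-z) = (-1)^m * p.eval z) (k : ℕ) (hk : (k + m) % 2 = 1) :
    p.coeff k = 0 := by
  have hcomp : p.comp (-X) = C ((-1:ℂ)^m) * p := by
    apply Polynomial.funext
    intro r
    simp [eval_comp, h r]
  have hco := congrArg (fun q => q.coeff k) hcomp
  simp only [qsp_coeff_comp_neg_X, coeff_C_mul] at hco
  have hpow : ((-1:ℂ))^k = -((-1:ℂ))^m := by
    rcases Nat.even_or_odd k with he | ho
    · have hm : Odd m := by
        rw [Nat.odd_iff]; rw [Nat.even_iff] at he; omega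
      rw [he.neg_one_pow, hm.neg_one_pow]; ring
    · have hm : Even m := by
        rw [Nat.even_iff]; rw [Nat.odd_iff] at ho; omega
      rw [ho.neg_one_pow, hm.neg_one_pow]
  rw [hpow] at hco
  have h2 : ((-1:ℂ))^m * (2 * p.coeff k) = 0 := by linear_combination -hco
  rcases mul_eq_zero.mp h2 with h3 | h3
  · exact absurd h3 (pow_ne_zero _ (by norm_num))
  · rcases mul_eq_zero.mp h3 with h4 | h4
    · exact absurd h4 (by norm_num)
    · exact h4

lemma qsp_coeff_mul_of_degree_le (p q : Polynomial ℂ) (a b : ℕ)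
    (hp : p.degree ≤ a) (hq : q.degree ≤ b) :
    (p * q).coeff (a + b) = p.coeff a * q.coeff b := by
  rw [coeff_mul]
  apply Finset.sum_eq_single (a, b)
  · rintro ⟨i, j⟩ hmem hne
    rw [Finset.HasAntidiagonal.mem_antidiagonal] at hmem
    by_cases hi : a < i
    · rw [coeff_eq_zero_of_degree_lt (lt_of_le_of_lt hp (by exact_mod_cast hi)), zero_mul]
    · have hj : b < j := by
        have : ¬(i = a ∧ j = b) := by
          intro ⟨h1, h2⟩; exact hne (by simp [h1, h2])
        omega
      rw [coeff_eq_zero_of_degree_lt (lt_of_le_of_lt hq (by exact_mod_cast hj)), mul_zero]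
  · intro h
    simp [Finset.HasAntidiagonal.mem_antidiagonal] at h

lemma qsp_exp_neg_real_mul_I (θ : ℝ) :
    Complex.exp (-((θ:ℂ) * Complex.I)) = starRingEnd ℂ (Complex.exp ((θ:ℂ) * Complex.I)) := by
  rw [← Complex.exp_conj]; congr 1; simp

/-- **Quantum signal processing, converse (realizability of admissible
polynomial pairs).**  If `P, Q ∈ ℂ[x]` satisfy `deg P ≤ d`, `deg Q ≤ d−1`
(i.e. `deg Q < d`, `Q = 0` allowed), `P` has parity `d mod 2` and `Q` has
parity `d−1 mod 2`, and `|P(x)|² + (1−x²)|Q(x)|² = 1` on `[−1,1]`, then there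
exist phase factors `Φ = (φ_0, …, φ_d) ∈ ℝ^{d+1}` such that for all
`x ∈ [−1,1]`,
`E(φ_0)·∏_{j=1}^d (O(x)·E(φ_j)) = [[P(x), −Q(x)√(1−x²)],[conj(Q(x))√(1−x²), conj(P(x))]]`. -/
theorem qsp_converse (d : ℕ) (P Q : Polynomial ℂ)
    (hPdeg : P.degree ≤ (d : ℕ))
    (hQdeg : Q.degree < (d : ℕ))
    (hPpar : ∀ z : ℂ, P.eval (-z) = (-1) ^ d * P.eval z)
    (hQpar : ∀ z : ℂ, Q.eval (-z) = (-1) ^ (d + 1) * Q.eval z)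
    (hnorm : ∀ x : ℝ, x ∈ Set.Icc (-1 : ℝ) 1 →
      ‖P.eval (x : ℂ)‖ ^ 2 +
          (1 - x ^ 2) * ‖Q.eval (x : ℂ)‖ ^ 2 = 1) :
    ∃ φ : Fin (d + 1) → ℝ,
      ∀ x : ℝ, x ∈ Set.Icc (-1 : ℝ) 1 →
        qspE (φ 0) * (List.ofFn fun j : Fin d => qspO x * qspE (φ j.succ)).prod =
          !![P.eval (x : ℂ),
              -(Q.eval (x : ℂ) * ((Real.sqrt (1 - x ^ 2) : ℝ) : ℂ));
            (starRingEnd ℂ) (Q.eval (x : ℂ)) * ((Real.sqrt (1 - x ^ 2) : ℝ) : ℂ),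
              (starRingEnd ℂ) (P.eval (x : ℂ))] := by
  induction d generalizing P Q with
  | zero =>
    have hQ0 : Q = 0 := degree_eq_bot.mp (Nat.WithBot.lt_zero_iff.mp (by exact_mod_cast hQdeg))
    have hPC : P = C (P.coeff 0) := eq_C_of_degree_le_zero (by exact_mod_cast hPdeg)
    set a := P.coeff 0 with ha
    have habs : ‖a‖ = 1 := by
      have h0 := hnorm 0 (by norm_num)
      rw [hQ0] at h0
      simp at h0
      rw [hPC] at h0
      simp at h0
      rcases h0 with h | h
      · exact h
      · nlinarith [norm_nonneg a]
    have hexp : Complex.exp ((a.arg : ℂ) * Complex.I) = a := by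
      have := Complex.norm_mul_exp_arg_mul_I a
      rw [habs] at this
      simpa using this
    refine ⟨fun _ => a.arg, fun x hx => ?_⟩
    have heval : P.eval (x:ℂ) = a := by rw [hPC]; simp
    rw [hQ0, heval]
    simp only [List.ofFn_zero, List.prod_nil, mul_one, qspE, qsp_exp_neg_real_mul_I, hexp]
    simp
  | succ n ih =>
    set Pc := P.map (starRingEnd ℂ) with hPcdef
    set Qc := Q.map (starRingEnd ℂ) with hQcdef
    have hQdeg' : Q.degree ≤ (n:ℕ) := by
      rw [degree_le_iff_coeff_zero]
      intro m hm
      exact (degree_lt_iff_coeff_zero _ _).mp hQdeg m (by exact_mod_cast hm)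
    have hPcdeg : Pc.degree ≤ ((n+1:ℕ):WithBot ℕ) := by
      rw [hPcdef]
      exact le_trans (degree_map_le) hPdeg
    have hQcdeg : Qc.degree ≤ ((n:ℕ):WithBot ℕ) := by
      rw [hQcdef]
      exact le_trans (degree_map_le) hQdeg'
    -- the polynomial norm identity
    have hN : P * Pc + (1 - X^2) * (Q * Qc) = 1 := by
      apply Polynomial.eq_of_infinite_eval_eq
      apply Set.Infinite.mono (s := (fun x : ℝ => (x:ℂ)) '' (Set.Icc (-1) 1))
      · rintro z ⟨x, hx, rfl⟩
        have hnx := hnorm x hx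
        simp only [Set.mem_setOf_eq, hPcdef, hQcdef, eval_add, eval_mul, eval_sub, eval_one,
          eval_pow, eval_X, qsp_eval_map_conj]
        rw [Complex.mul_conj, Complex.mul_conj]
        conv_rhs => rw [show ((1:ℂ)) = ((1:ℝ):ℂ) by norm_num, ← hnx]
        push_cast [Complex.normSq_eq_norm_sq]
        ring
      · apply Set.Infinite.image
        · exact fun a _ b _ h => Complex.ofReal_injective h
        · exact Set.Icc_infinite (by norm_num : (-1:ℝ) < 1)
    -- coefficient parity facts
    have hPn : P.coeff n = 0 := qsp_coeff_parity P (n+1) hPpar n (by omega)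
    -- top coefficient identity
    have hkey : P.coeff (n+1) * (starRingEnd ℂ) (P.coeff (n+1))
        = Q.coeff n * (starRingEnd ℂ) (Q.coeff n) := by
      have h2n := congrArg (fun r : Polynomial ℂ => r.coeff (2*n+2)) hN
      simp only [coeff_add, coeff_one] at h2n
      rw [if_neg (by omega)] at h2n
      rw [show 2*n+2 = (n+1)+(n+1) by ring] at h2n
      rw [qsp_coeff_mul_of_degree_le P Pc (n+1) (n+1) hPdeg hPcdeg] at h2n
      rw [show (n+1)+(n+1) = (2*n)+2 by ring] at h2n
      rw [sub_mul, one_mul, coeff_sub] at h2n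
      rw [coeff_X_pow_mul (Q * Qc) 2 (2*n)] at h2n
      rw [coeff_eq_zero_of_degree_lt (p := Q * Qc)
        (lt_of_le_of_lt (le_trans (degree_mul_le Q Qc)
          (add_le_add hQdeg' hQcdeg)) (by exact_mod_cast by omega))] at h2n
      rw [show 2*n = n+n by ring] at h2n
      rw [qsp_coeff_mul_of_degree_le Q Qc n n hQdeg' hQcdeg] at h2n
      rw [hPcdef, hQcdef, coeff_map, coeff_map] at h2n
      linear_combination h2n
    set p := P.coeff (n+1) with hp
    set q := Q.coeff n with hq
    have habs : ‖p‖ = ‖q‖ := by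
      have h := hkey
      rw [Complex.mul_conj, Complex.mul_conj] at h
      have h2 : Complex.normSq p = Complex.normSq q := by exact_mod_cast h
      rw [Complex.norm_def, Complex.norm_def, h2]
    set φ0 := (p.arg + q.arg)/2 with hφ0
    set c := Complex.exp ((φ0:ℂ) * Complex.I) with hcdef
    have e1 := Complex.norm_mul_exp_arg_mul_I p
    have e2 := Complex.norm_mul_exp_arg_mul_I q
    have hc2' : c^2 = Complex.exp ((p.arg:ℂ)*Complex.I) * Complex.exp ((q.arg:ℂ)*Complex.I) := by
      rw [hcdef, sq, ← Complex.exp_add, ← Complex.exp_add]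
      congr 1
      rw [hφ0]
      push_cast
      ring
    have hBq : Complex.exp ((q.arg:ℂ)*Complex.I) * (starRingEnd ℂ) q = (‖q‖ : ℂ) := by
      conv_lhs => rw [← e2]
      rw [map_mul, ← Complex.exp_conj]
      rw [Complex.conj_ofReal, mul_left_comm, ← Complex.exp_add]
      simp
    have hc2 : c^2 * (starRingEnd ℂ) q = p := by
      rw [hc2', mul_assoc, hBq, ← habs, mul_comm]
      exact e1
    have hcc : c * (starRingEnd ℂ) c = 1 := by
      rw [Complex.mul_conj, Complex.normSq_eq_norm_sq, Complex.norm_exp_ofReal_mul_I]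
      norm_num
    have hcp : (starRingEnd ℂ) c * p = c * (starRingEnd ℂ) q := by
      linear_combination (-(starRingEnd ℂ c)) * hc2 + c * ((starRingEnd ℂ) q) * hcc
    have hcp' : c * (starRingEnd ℂ) p = (starRingEnd ℂ) c * q := by
      have := congrArg (starRingEnd ℂ) hcp
      simpa [map_mul] using this
    -- auxiliary vanishing facts
    have hQz : ∀ j, n < j → Q.coeff j = 0 := fun j hj =>
      coeff_eq_zero_of_degree_lt (lt_of_le_of_lt hQdeg' (by exact_mod_cast hj))
    have hPz : ∀ j, n+1 < j → P.coeff j = 0 := fun j hj =>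
      coeff_eq_zero_of_degree_lt (lt_of_le_of_lt hPdeg (by exact_mod_cast hj))
    have hQpar' : ∀ j, (j + (n+1+1)) % 2 = 1 → Q.coeff j = 0 :=
      qsp_coeff_parity Q (n+1+1) hQpar
    -- the reduced polynomials
    set P1 : Polynomial ℂ := C ((starRingEnd ℂ) c) * (X * P) + C c * ((1 - X^2) * Qc)
      with hP1def
    set Q1 : Polynomial ℂ := C ((starRingEnd ℂ) c) * (X * Q) - C c * Pc with hQ1def
    have hP1deg : P1.degree ≤ (n:ℕ) := by
      rw [degree_le_iff_coeff_zero]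
      intro m hm
      have hm' : n < m := by exact_mod_cast hm
      obtain ⟨k, rfl⟩ : ∃ k, m = k + 1 := ⟨m-1, by omega⟩
      rw [hP1def]
      simp only [coeff_add, coeff_C_mul, sub_mul, one_mul, coeff_sub, coeff_X_mul,
        coeff_X_pow_mul']
      rcases lt_trichotomy k (n+1) with hk | hk | hk
      · have hkn : k = n := by omega
        rw [hkn, hPn]
        rw [coeff_eq_zero_of_degree_lt (p := Qc) (lt_of_le_of_lt hQcdeg (by exact_mod_cast by omega))]
        by_cases hn : 2 ≤ n+1
        · rw [if_pos hn, hQcdef, coeff_map, hQpar' (n+1-2) (by omega)]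
          simp
        · rw [if_neg hn]
          simp
      · subst hk
        rw [coeff_eq_zero_of_degree_lt (p := Qc) (lt_of_le_of_lt hQcdeg (by exact_mod_cast by omega)),
          if_pos (by omega : 2 ≤ n+1+1), show n+1+1-2 = n by omega, hQcdef, coeff_map]
        linear_combination hcp
      · rw [hPz k (by omega),
          coeff_eq_zero_of_degree_lt (p := Qc) (lt_of_le_of_lt hQcdeg (by exact_mod_cast by omega))]
        by_cases hn : 2 ≤ k+1
        · rw [if_pos hn, hQcdef, coeff_map, hQz (k+1-2) (by omega)]
          simp
        · rw [if_neg hn]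
          simp
    have hQ1deg : Q1.degree < (n:ℕ) := by
      rw [degree_lt_iff_coeff_zero]
      intro m hm
      have hm' : n ≤ m := by exact_mod_cast hm
      rw [hQ1def]
      simp only [coeff_sub, coeff_C_mul]
      rcases Nat.lt_or_ge m (n+1) with hmlt | hmge
      · have hmn : m = n := by omega
        rw [hmn, hPcdef, coeff_map, hPn, map_zero, mul_zero, sub_zero]
        rcases Nat.eq_zero_or_pos n with h0 | h0
        · subst h0
          rw [mul_coeff_zero]
          simp
        · obtain ⟨k, hk⟩ : ∃ k, n = k + 1 := ⟨n-1, by omega⟩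
          rw [hk, coeff_X_mul, hQpar' k (by omega)]
          simp
      · obtain ⟨k, rfl⟩ : ∃ k, m = k + 1 := ⟨m-1, by omega⟩
        rw [coeff_X_mul, hPcdef, coeff_map]
        by_cases hk : k = n
        · subst hk
          linear_combination -hcp'
        · rw [hQz k (by omega), hPz (k+1) (by omega)]
          simp
    -- parity of the reduced polynomials
    have hPcpar : ∀ z : ℂ, Pc.eval (-z) = (-1)^(n+1) * Pc.eval z := by
      intro z
      rw [hPcdef, qsp_eval_map_conj', qsp_eval_map_conj', map_neg, hPpar]
      simp [map_mul, map_pow]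
    have hQcpar : ∀ z : ℂ, Qc.eval (-z) = (-1)^(n+1+1) * Qc.eval z := by
      intro z
      rw [hQcdef, qsp_eval_map_conj', qsp_eval_map_conj', map_neg, hQpar]
      simp [map_mul, map_pow]
    have hP1par : ∀ z : ℂ, P1.eval (-z) = (-1)^n * P1.eval z := by
      intro z
      rw [hP1def]
      simp only [eval_add, eval_mul, eval_C, eval_X, eval_sub, eval_one, eval_pow]
      have h1 := hPpar z
      have h2 := hQcpar z
      linear_combination (-z) * (starRingEnd ℂ c) * h1 + c * (1 - z^2) * h2
    have hQ1par : ∀ z : ℂ, Q1.eval (-z) = (-1)^(n+1) * Q1.eval z := by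
      intro z
      rw [hQ1def]
      simp only [eval_sub, eval_mul, eval_C, eval_X]
      have h1 := hPcpar z
      have h2 := hQpar z
      linear_combination (-z) * (starRingEnd ℂ c) * h2 - c * h1
    -- evaluation formulas
    have hev1 : ∀ x : ℝ, P1.eval (x:ℂ) =
        (starRingEnd ℂ) c * ((x:ℂ) * P.eval (x:ℂ)) +
          c * ((1 - (x:ℂ)^2) * (starRingEnd ℂ) (Q.eval (x:ℂ))) := by
      intro x
      rw [hP1def]
      simp only [eval_add, eval_mul, eval_C, eval_X, eval_sub, eval_one, eval_pow,
        hQcdef, qsp_eval_map_conj]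
    have hev2 : ∀ x : ℝ, Q1.eval (x:ℂ) =
        (starRingEnd ℂ) c * ((x:ℂ) * Q.eval (x:ℂ)) - c * (starRingEnd ℂ) (P.eval (x:ℂ)) := by
      intro x
      rw [hQ1def]
      simp only [eval_sub, eval_mul, eval_C, eval_X, hPcdef, qsp_eval_map_conj]
    have hev1c : ∀ x : ℝ, (starRingEnd ℂ) (P1.eval (x:ℂ)) =
        c * ((x:ℂ) * (starRingEnd ℂ) (P.eval (x:ℂ))) +
          (starRingEnd ℂ) c * ((1 - (x:ℂ)^2) * Q.eval (x:ℂ)) := by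
      intro x
      rw [hev1 x]
      simp [map_add, map_mul, map_sub, map_pow, Complex.conj_conj, Complex.conj_ofReal]
    have hev2c : ∀ x : ℝ, (starRingEnd ℂ) (Q1.eval (x:ℂ)) =
        c * ((x:ℂ) * (starRingEnd ℂ) (Q.eval (x:ℂ))) - (starRingEnd ℂ) c * P.eval (x:ℂ) := by
      intro x
      rw [hev2 x]
      simp [map_sub, map_mul, Complex.conj_conj, Complex.conj_ofReal]
    -- the norm condition for the reduced polynomials
    have hnorm1 : ∀ x : ℝ, x ∈ Set.Icc (-1:ℝ) 1 →
        ‖P1.eval (x:ℂ)‖ ^ 2 + (1 - x^2) * ‖Q1.eval (x:ℂ)‖ ^ 2 = 1 := by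
      intro x hx
      have hNx := congrArg (eval (x:ℂ)) hN
      simp only [eval_add, eval_mul, eval_sub, eval_one, eval_pow, eval_X,
        hPcdef, hQcdef, qsp_eval_map_conj] at hNx
      have hC : P1.eval (x:ℂ) * (starRingEnd ℂ) (P1.eval (x:ℂ)) +
          ((1:ℂ) - (x:ℂ)^2) * (Q1.eval (x:ℂ) * (starRingEnd ℂ) (Q1.eval (x:ℂ))) = 1 := by
        rw [hev1c x, hev2c x, hev1 x, hev2 x]
        linear_combination c * (starRingEnd ℂ) c * hNx + hcc
      rw [Complex.mul_conj, Complex.mul_conj] at hC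
      have hR : ((‖P1.eval (x:ℂ)‖^2 + (1-x^2) * ‖Q1.eval (x:ℂ)‖^2 : ℝ) : ℂ)
          = ((1:ℝ):ℂ) := by
        push_cast [Complex.normSq_eq_norm_sq] at hC ⊢
        linear_combination hC
      exact_mod_cast hR
    obtain ⟨φ', hφ'⟩ := ih P1 Q1 hP1deg hQ1deg hP1par hQ1par hnorm1
    refine ⟨Fin.cons φ0 φ', fun x hx => ?_⟩
    obtain ⟨hx1, hx2⟩ := hx
    have hx0 : (0:ℝ) ≤ 1 - x^2 := by nlinarith
    have hs2 : (((Real.sqrt (1 - x^2) : ℝ) : ℂ))^2 = 1 - (x:ℂ)^2 := by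
      rw [← Complex.ofReal_pow, Real.sq_sqrt hx0]
      push_cast
      ring
    have hlist : (List.ofFn fun j : Fin (n+1) => qspO x * qspE ((Fin.cons φ0 φ' : Fin (n+1+1) → ℝ) j.succ))
        = (qspO x * qspE (φ' 0)) :: List.ofFn fun j : Fin n => qspO x * qspE (φ' j.succ) := by
      rw [List.ofFn_succ]
      simp [Fin.cons_succ]
    rw [Fin.cons_zero, hlist, List.prod_cons, mul_assoc (qspO x), ← mul_assoc (qspE φ0)]
    rw [hφ' x ⟨hx1, hx2⟩]
    ext i j
    fin_cases i <;> fin_cases j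
    · simp [qspE, qspO, Matrix.mul_apply, Fin.sum_univ_two, qsp_exp_neg_real_mul_I,
        hev1 x, hev2 x, map_add, map_mul, map_sub, map_pow, map_one,
        Complex.conj_conj, Complex.conj_ofReal]
      rw [← hcdef]
      linear_combination (P.eval (x:ℂ)) * hcc +
        (-(c^2) * (x:ℂ) * (starRingEnd ℂ) (Q.eval (x:ℂ)) + c * (starRingEnd ℂ) c * P.eval (x:ℂ)) * hs2
    · simp [qspE, qspO, Matrix.mul_apply, Fin.sum_univ_two, qsp_exp_neg_real_mul_I,
        hev1 x, hev2 x, map_add, map_mul, map_sub, map_pow, map_one,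
        Complex.conj_conj, Complex.conj_ofReal]
      rw [← hcdef]
      linear_combination (-(((Real.sqrt (1-x^2):ℝ):ℂ)) * Q.eval (x:ℂ)) * hcc
    · simp [qspE, qspO, Matrix.mul_apply, Fin.sum_univ_two, qsp_exp_neg_real_mul_I,
        hev1 x, hev2 x, map_add, map_mul, map_sub, map_pow, map_one,
        Complex.conj_conj, Complex.conj_ofReal]
      rw [← hcdef]
      linear_combination ((((Real.sqrt (1-x^2):ℝ):ℂ)) * (starRingEnd ℂ) (Q.eval (x:ℂ))) * hcc
    · simp [qspE, qspO, Matrix.mul_apply, Fin.sum_univ_two, qsp_exp_neg_real_mul_I,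
        hev1 x, hev2 x, map_add, map_mul, map_sub, map_pow, map_one,
        Complex.conj_conj, Complex.conj_ofReal]
      rw [← hcdef]
      linear_combination ((starRingEnd ℂ) (P.eval (x:ℂ))) * hcc +
        (-((starRingEnd ℂ) c)^2 * (x:ℂ) * Q.eval (x:ℂ) + c * (starRingEnd ℂ) c * (starRingEnd ℂ) (P.eval (x:ℂ))) * hs2
end
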